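/- arXiv:math/0505541 — 12 statements merged into one kernel-verified Lean document; each statement's English description precedes it below -/
import Mathlib

section
/- Let (Q, μ) be a measure space and let T be a symmetric linear operator on L²(Q, μ; ℂ), i.e. a linear map defined on a subspace D of L²(Q, μ; ℂ) such that ⟪T x, y⟫ = ⟪x, T y⟫ for all x, y ∈ D. Suppose Φ₀ ∈ D is not the zero element, Φ₀ is almost everywhere real-valued and nonnegative, and T Φ₀ = e₀ · Φ₀ for some real number e₀. Then for every φ ∈ D whose real part is strictly positive almost everywhere, and for all real numbers a, b such that a · Re(φ(q)) ≤ Re((T φ)(q)) ≤ b · Re(φ(q)) for μ-almost every q ∈ Q, one has a ≤ e₀ ≤ b. -/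
open MeasureTheory
open scoped ComplexInnerProductSpace

/-! Symmetry and the eigenvalue equation give `⟪Φ₀, T φ⟫ = e₀ ⟪Φ₀, φ⟫`. As `Φ₀` is real and
nonnegative, the real part of an inner product with `Φ₀` is an integral against the weight
`Φ₀ ≥ 0`, so the pointwise bounds `a Re φ ≤ Re T φ ≤ b Re φ` integrate to `a I ≤ e₀ I ≤ b I`
with `I = Re ⟪Φ₀, φ⟫`, and `I > 0` because `Φ₀ ≠ 0` and `Re φ > 0`. -/

theorem inner_apply_eq_mul_inner_of_apply_eq_smul {𝕜 E : Type*} [RCLike 𝕜]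
    [NormedAddCommGroup E] [InnerProductSpace 𝕜 E] {D : Submodule 𝕜 E} {T : D →ₗ[𝕜] E}
    (hT : ∀ x y : D, inner 𝕜 (T x) (y : E) = inner 𝕜 (x : E) (T y))
    {x : D} {e : ℝ} (hx : T x = (e : 𝕜) • (x : E)) (y : D) :
    inner 𝕜 (x : E) (T y) = e * inner 𝕜 (x : E) (y : E) := by
  rw [← hT, hx, inner_smul_left, RCLike.conj_ofReal]

theorem Complex.re_inner_of_im_eq_zero {z : ℂ} (hz : z.im = 0) (w : ℂ) :
    (inner ℂ z w).re = z.re * w.re := by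
  simp [Complex.mul_re, hz, mul_comm]

namespace MeasureTheory.L2

variable {Q : Type*} [MeasurableSpace Q] {μ : Measure Q} {f g h : Lp ℂ 2 μ}

theorem integrable_re_mul_re (hf : ∀ᵐ q ∂μ, (f q).im = 0) (g : Lp ℂ 2 μ) :
    Integrable (fun q => (f q).re * (g q).re) μ :=
  (integrable_inner (𝕜 := ℂ) f g).re.congr <|
    hf.mono fun _ hq => Complex.re_inner_of_im_eq_zero hq (g _)

theorem re_inner_eq_integral_re_mul_re (hf : ∀ᵐ q ∂μ, (f q).im = 0) (g : Lp ℂ 2 μ) :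
    (⟪f, g⟫).re = ∫ q, (f q).re * (g q).re ∂μ := by
  rw [inner_def, ← RCLike.re_to_complex, ← integral_re (integrable_inner f g)]
  exact integral_congr_ae <| hf.mono fun _ hq => Complex.re_inner_of_im_eq_zero hq (g _)

section NonnegWeight

variable (hf_im : ∀ᵐ q ∂μ, (f q).im = 0) (hf_re : ∀ᵐ q ∂μ, 0 ≤ (f q).re)
include hf_im hf_re

theorem mul_re_inner_le_re_inner {c : ℝ} (hgh : ∀ᵐ q ∂μ, c * (g q).re ≤ (h q).re) :
    c * (⟪f, g⟫).re ≤ (⟪f, h⟫).re := by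
  rw [re_inner_eq_integral_re_mul_re hf_im, re_inner_eq_integral_re_mul_re hf_im,
    ← integral_const_mul]
  refine integral_mono_ae ((integrable_re_mul_re hf_im g).const_mul c)
    (integrable_re_mul_re hf_im h) ?_
  filter_upwards [hf_re, hgh] with q hq hle
  rw [mul_left_comm]
  exact mul_le_mul_of_nonneg_left hle hq

theorem re_inner_le_mul_re_inner {c : ℝ} (hgh : ∀ᵐ q ∂μ, (h q).re ≤ c * (g q).re) :
    (⟪f, h⟫).re ≤ c * (⟪f, g⟫).re := by
  rw [re_inner_eq_integral_re_mul_re hf_im, re_inner_eq_integral_re_mul_re hf_im,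
    ← integral_const_mul]
  refine integral_mono_ae (integrable_re_mul_re hf_im h)
    ((integrable_re_mul_re hf_im g).const_mul c) ?_
  filter_upwards [hf_re, hgh] with q hq hle
  rw [mul_left_comm]
  exact mul_le_mul_of_nonneg_left hle hq

theorem re_inner_pos (hf : f ≠ 0) (hg : ∀ᵐ q ∂μ, 0 < (g q).re) : 0 < (⟪f, g⟫).re := by
  have hnonneg : 0 ≤ᵐ[μ] fun q => (f q).re * (g q).re := by
    filter_upwards [hf_re, hg] with q hfq hgq
    exact mul_nonneg hfq hgq.le
  rw [re_inner_eq_integral_re_mul_re hf_im]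
  refine (integral_nonneg_of_ae hnonneg).lt_of_ne' fun hzero => hf ?_
  have hprod := (integral_eq_zero_iff_of_nonneg_ae hnonneg (integrable_re_mul_re hf_im g)).1 hzero
  refine Lp.eq_zero_iff_ae_eq_zero.2 ?_
  filter_upwards [hprod, hf_im, hg] with q hq him hgq
  rw [Pi.zero_apply] at hq ⊢
  exact Complex.ext ((mul_eq_zero.1 hq).resolve_right hgq.ne') him

end NonnegWeight

end MeasureTheory.L2

open MeasureTheory.L2 in
/-- If a symmetric operator `T` defined on a subspace `D` of
`L²(Q, μ; ℂ)` has a nonzero eigenvector `Φ₀` which is a.e. real-valued and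
nonnegative, with real eigenvalue `e₀`, then for every `φ ∈ D` whose real part
is a.e. strictly positive and every `a b : ℝ` with
`a · Re φ ≤ Re (T φ) ≤ b · Re φ` a.e., one has `a ≤ e₀ ≤ b`. -/
theorem eigenvalue_bounds_of_nonneg_eigenvector
    {Q : Type*} [MeasurableSpace Q] (μ : Measure Q)
    (D : Submodule ℂ (Lp ℂ 2 μ)) (T : D →ₗ[ℂ] Lp ℂ 2 μ)
    (hsym : ∀ x y : D, ⟪T x, (y : Lp ℂ 2 μ)⟫ = ⟪(x : Lp ℂ 2 μ), T y⟫)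
    (Φ₀ : D) (hΦ₀ne : (Φ₀ : Lp ℂ 2 μ) ≠ 0)
    (hΦ₀real : ∀ᵐ q ∂μ, (((Φ₀ : Lp ℂ 2 μ) : Q → ℂ) q).im = 0)
    (hΦ₀nonneg : ∀ᵐ q ∂μ, 0 ≤ (((Φ₀ : Lp ℂ 2 μ) : Q → ℂ) q).re)
    (e₀ : ℝ) (heig : T Φ₀ = (e₀ : ℂ) • (Φ₀ : Lp ℂ 2 μ))
    (φ : D) (hφpos : ∀ᵐ q ∂μ, 0 < (((φ : Lp ℂ 2 μ) : Q → ℂ) q).re)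
    (a b : ℝ)
    (hab : ∀ᵐ q ∂μ,
      a * (((φ : Lp ℂ 2 μ) : Q → ℂ) q).re ≤ ((T φ : Q → ℂ) q).re ∧
      ((T φ : Q → ℂ) q).re ≤ b * (((φ : Lp ℂ 2 μ) : Q → ℂ) q).re) :
    a ≤ e₀ ∧ e₀ ≤ b := by
  have hpos := re_inner_pos hΦ₀real hΦ₀nonneg hΦ₀ne hφpos
  have hlower := mul_re_inner_le_re_inner hΦ₀real hΦ₀nonneg (hab.mono fun _ hq => hq.1)
  have hupper := re_inner_le_mul_re_inner hΦ₀real hΦ₀nonneg (hab.mono fun _ hq => hq.2)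
  simp only [inner_apply_eq_mul_inner_of_apply_eq_smul hsym heig, Complex.coe_algebraMap,
    Complex.re_ofReal_mul] at hlower hupper
  exact ⟨le_of_mul_le_mul_right hlower hpos, le_of_mul_le_mul_right hupper hpos⟩
end

section
/- Let (Q, μ) be a measure space and let K be a densely defined linear operator on L²(Q, μ; ℂ) with adjoint K*. Suppose Ψ₀ is in the domain of K, Ψ₀ is not the zero element, Ψ₀ is almost everywhere real-valued and nonnegative, and K Ψ₀ = k₀ · Ψ₀ for some complex number k₀. Then for every φ in the domain of K* that is almost everywhere real-valued with φ(q) > 0 for μ-almost every q, and for all real numbers a, b such that a · φ(q) ≤ −Im((K* φ)(q)) ≤ b · φ(q) for μ-almost every q ∈ Q, one has a ≤ Im(k₀) ≤ b. -/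
/-!
Pairing the eigenvalue equation with `φ` gives `⟪K* φ, Ψ₀⟫ = ⟪φ, K Ψ₀⟫ = k₀ ⟪φ, Ψ₀⟫`, where
`⟪φ, Ψ₀⟫ = ∫ φ Ψ₀` is real and strictly positive. As `Ψ₀` is real and nonnegative,
`Im ⟪K* φ, Ψ₀⟫ = ∫ (-Im K* φ) Ψ₀` lies between `a ∫ φ Ψ₀` and `b ∫ φ Ψ₀`; dividing by
`∫ φ Ψ₀` bounds `Im k₀`.
-/

open MeasureTheory
open scoped ComplexInnerProductSpace

lemma im_inner_eq_re_inner_I_smul {E : Type*} [NormedAddCommGroup E] [InnerProductSpace ℂ E]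
    (x y : E) : (⟪x, y⟫).im = (⟪Complex.I • x, y⟫).re := by
  simp

namespace MeasureTheory.L2

open Complex

variable {Q : Type*} [MeasurableSpace Q] {μ : Measure Q}

lemma integrable_re_mul_re_add_im_mul_im (f g : Lp ℂ 2 μ) :
    Integrable (fun q => (f q).re * (g q).re + (f q).im * (g q).im) μ :=
  (integrable_inner (𝕜 := ℂ) f g).re.congr <| ae_of_all _ fun q => by
    simp only [RCLike.inner_apply', RCLike.re_to_complex, mul_re, conj_re, conj_im]
    ring

lemma re_inner_eq_integral (f g : Lp ℂ 2 μ) :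
    (⟪f, g⟫).re = ∫ q, (f q).re * (g q).re + (f q).im * (g q).im ∂μ := by
  rw [inner_def, ← RCLike.re_to_complex, ← integral_re (integrable_inner f g)]
  congr with q
  simp only [RCLike.inner_apply', RCLike.re_to_complex, mul_re, conj_re, conj_im]
  ring

variable {f g : Lp ℂ 2 μ}

lemma im_inner_eq_zero_of_ae_im_eq_zero (hf : ∀ᵐ q ∂μ, (f q).im = 0)
    (hg : ∀ᵐ q ∂μ, (g q).im = 0) : (⟪f, g⟫).im = 0 := by
  rw [im_inner_eq_re_inner_I_smul, re_inner_eq_integral]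
  refine integral_eq_zero_of_ae ?_
  filter_upwards [Lp.coeFn_smul I f, hf, hg] with q hq hfq hgq
  simp [hq, hfq, hgq]

lemma re_inner_le_re_inner_of_ae_re_le {f₁ f₂ : Lp ℂ 2 μ}
    (hg_im : ∀ᵐ q ∂μ, (g q).im = 0) (hg_nonneg : ∀ᵐ q ∂μ, 0 ≤ (g q).re)
    (hf : ∀ᵐ q ∂μ, (f₁ q).re ≤ (f₂ q).re) : (⟪f₁, g⟫).re ≤ (⟪f₂, g⟫).re := by
  rw [re_inner_eq_integral, re_inner_eq_integral]
  refine integral_mono_ae (integrable_re_mul_re_add_im_mul_im f₁ g)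
    (integrable_re_mul_re_add_im_mul_im f₂ g) ?_
  filter_upwards [hg_im, hg_nonneg, hf] with q himq hreq hfq
  simpa [himq] using mul_le_mul_of_nonneg_right hfq hreq

lemma re_inner_pos_of_ae_pos (hf : ∀ᵐ q ∂μ, 0 < (f q).re)
    (hg_im : ∀ᵐ q ∂μ, (g q).im = 0) (hg_nonneg : ∀ᵐ q ∂μ, 0 ≤ (g q).re) (hg : g ≠ 0) :
    0 < (⟪f, g⟫).re := by
  have hint : ∀ᵐ q ∂μ, (f q).re * (g q).re + (f q).im * (g q).im = (f q).re * (g q).re := by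
    filter_upwards [hg_im] with q hq
    simp [hq]
  have hnonneg : ∀ᵐ q ∂μ, 0 ≤ (f q).re * (g q).re := by
    filter_upwards [hf, hg_nonneg] with q hfq hgq
    exact mul_nonneg hfq.le hgq
  rw [re_inner_eq_integral, integral_congr_ae hint]
  refine (integral_nonneg_of_ae hnonneg).lt_of_ne fun hzero => hg ?_
  have hprod := (integral_eq_zero_iff_of_nonneg_ae hnonneg
    ((integrable_re_mul_re_add_im_mul_im f g).congr hint)).mp hzero.symm
  rw [Lp.eq_zero_iff_ae_eq_zero]
  filter_upwards [hprod, hf, hg_im] with q hq hfq himq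
  exact Complex.ext (by simpa [hfq.ne'] using hq) (by simpa using himq)

lemma mul_re_inner_le_im_inner {a : ℝ} {h : Lp ℂ 2 μ}
    (hg_im : ∀ᵐ q ∂μ, (g q).im = 0) (hg_nonneg : ∀ᵐ q ∂μ, 0 ≤ (g q).re)
    (hfh : ∀ᵐ q ∂μ, a * (f q).re ≤ -(h q).im) : a * (⟪f, g⟫).re ≤ (⟪h, g⟫).im := by
  have := re_inner_le_re_inner_of_ae_re_le (f₁ := (a : ℂ) • f) (f₂ := I • h) hg_im hg_nonneg ?_
  · rwa [← im_inner_eq_re_inner_I_smul, inner_smul_left, conj_ofReal, re_ofReal_mul] at this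
  filter_upwards [Lp.coeFn_smul (a : ℂ) f, Lp.coeFn_smul I h, hfh] with q hfq hhq hq
  rw [hfq, hhq]
  simpa using hq

lemma im_inner_le_mul_re_inner {b : ℝ} {h : Lp ℂ 2 μ}
    (hg_im : ∀ᵐ q ∂μ, (g q).im = 0) (hg_nonneg : ∀ᵐ q ∂μ, 0 ≤ (g q).re)
    (hfh : ∀ᵐ q ∂μ, -(h q).im ≤ b * (f q).re) : (⟪h, g⟫).im ≤ b * (⟪f, g⟫).re := by
  have := re_inner_le_re_inner_of_ae_re_le (f₁ := I • h) (f₂ := (b : ℂ) • f) hg_im hg_nonneg ?_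
  · rwa [← im_inner_eq_re_inner_I_smul, inner_smul_left, conj_ofReal, re_ofReal_mul] at this
  filter_upwards [Lp.coeFn_smul (b : ℂ) f, Lp.coeFn_smul I h, hfh] with q hfq hhq hq
  rw [hfq, hhq]
  simpa using hq

end MeasureTheory.L2

/-- If a densely defined operator `K` on `L²(Q, μ; ℂ)` has a nonzero
eigenvector `Ψ₀` which is a.e. real-valued and nonnegative, with eigenvalue `k₀ ∈ ℂ`,
then for every a.e. real-valued, a.e. strictly positive `φ` in the domain of the
adjoint `K*`, and all `a b : ℝ` with `a · φ ≤ −Im (K* φ) ≤ b · φ` a.e.,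
one has `a ≤ Im k₀ ≤ b`. -/
theorem im_eigenvalue_bounds_of_nonneg_eigenvector_nonsym
    {Q : Type*} [MeasurableSpace Q] (μ : Measure Q)
    (K : Lp ℂ 2 μ →ₗ.[ℂ] Lp ℂ 2 μ) (hK : Dense (K.domain : Set (Lp ℂ 2 μ)))
    (Ψ₀ : K.domain) (hΨ₀ne : (Ψ₀ : Lp ℂ 2 μ) ≠ 0)
    (hΨ₀real : ∀ᵐ q ∂μ, (((Ψ₀ : Lp ℂ 2 μ) : Q → ℂ) q).im = 0)
    (hΨ₀nonneg : ∀ᵐ q ∂μ, 0 ≤ (((Ψ₀ : Lp ℂ 2 μ) : Q → ℂ) q).re)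
    (k₀ : ℂ) (heig : K Ψ₀ = k₀ • (Ψ₀ : Lp ℂ 2 μ))
    (φ : K.adjoint.domain)
    (hφreal : ∀ᵐ q ∂μ, (((φ : Lp ℂ 2 μ) : Q → ℂ) q).im = 0)
    (hφpos : ∀ᵐ q ∂μ, 0 < (((φ : Lp ℂ 2 μ) : Q → ℂ) q).re)
    (a b : ℝ)
    (hab : ∀ᵐ q ∂μ,
      a * (((φ : Lp ℂ 2 μ) : Q → ℂ) q).re ≤ -((K.adjoint φ : Q → ℂ) q).im ∧
      -((K.adjoint φ : Q → ℂ) q).im ≤ b * (((φ : Lp ℂ 2 μ) : Q → ℂ) q).re) :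
    a ≤ k₀.im ∧ k₀.im ≤ b := by
  set r := (⟪(φ : Lp ℂ 2 μ), (Ψ₀ : Lp ℂ 2 μ)⟫).re
  have hr : 0 < r := L2.re_inner_pos_of_ae_pos hφpos hΨ₀real hΨ₀nonneg hΨ₀ne
  have hinner : ⟪(φ : Lp ℂ 2 μ), (Ψ₀ : Lp ℂ 2 μ)⟫ = r :=
    Complex.ext rfl (L2.im_inner_eq_zero_of_ae_im_eq_zero hφreal hΨ₀real)
  have him : (⟪K.adjoint φ, (Ψ₀ : Lp ℂ 2 μ)⟫).im = k₀.im * r := by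
    rw [LinearPMap.adjoint_isFormalAdjoint hK φ Ψ₀, heig, inner_smul_right, hinner,
      Complex.im_mul_ofReal]
  have hlow := L2.mul_re_inner_le_im_inner hΨ₀real hΨ₀nonneg (hab.mono fun _ h => h.1)
  have hhigh := L2.im_inner_le_mul_re_inner hΨ₀real hΨ₀nonneg (hab.mono fun _ h => h.2)
  rw [him] at hlow hhigh
  exact ⟨le_of_mul_le_mul_right hlow hr, le_of_mul_le_mul_right hhigh hr⟩
end

section
/- (Barta's inequalities.) Let d ≥ 1 and let Ω be a bounded open connected subset of d-dimensional Euclidean space, with μ the Lebesgue measure restricted to Ω. Let Φ₀ : Ω → ℝ be twice continuously differentiable on Ω with Φ₀ > 0 on Ω, Φ₀ integrable on Ω, and satisfying −ΔΦ₀ = e₀ Φ₀ on Ω for some real number e₀ (Δ being the Euclidean Laplacian). Let φ : Ω → ℝ be twice continuously differentiable with φ > 0 on Ω, such that Φ₀·Δφ and φ·ΔΦ₀ are integrable on Ω, the products Φ₀·φ are integrable, and Green's identity ∫_Ω Φ₀ Δφ dμ = ∫_Ω φ ΔΦ₀ dμ holds. Then for all real numbers a, b such that a·φ(x) ≤ −Δφ(x)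 ≤ b·φ(x) for every x ∈ Ω, one has a ≤ e₀ ≤ b; equivalently, inf_Ω(−Δφ/φ) ≤ e₀ ≤ sup_Ω(−Δφ/φ). -/
open MeasureTheory

/-- The Euclidean Laplacian: the sum of the second partial derivatives. -/
noncomputable def laplacian {d : ℕ} (f : EuclideanSpace ℝ (Fin d) → ℝ)
    (x : EuclideanSpace ℝ (Fin d)) : ℝ :=
  ∑ i : Fin d, iteratedFDeriv ℝ 2 f x
    ![EuclideanSpace.single i (1 : ℝ), EuclideanSpace.single i (1 : ℝ)]

/-- **Barta's inequalities.** Let `Ω ⊆ ℝ^d` be a bounded open connected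
set, `Φ₀ > 0` a `C²` integrable eigenfunction of `−Δ` on `Ω` with eigenvalue `e₀`, and
`φ > 0` a `C²` function on `Ω` satisfying the stated integrability conditions and
Green's identity. If `a·φ ≤ −Δφ ≤ b·φ` on `Ω` then `a ≤ e₀ ≤ b`. -/
theorem barta_inequalities {d : ℕ} (hd : 1 ≤ d)
    (Ω : Set (EuclideanSpace ℝ (Fin d)))
    (hΩo : IsOpen Ω) (hΩb : Bornology.IsBounded Ω) (hΩc : IsConnected Ω)
    (Φ₀ : EuclideanSpace ℝ (Fin d) → ℝ)
    (hΦ₀C2 : ContDiffOn ℝ 2 Φ₀ Ω)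
    (hΦ₀pos : ∀ x ∈ Ω, 0 < Φ₀ x)
    (hΦ₀int : IntegrableOn Φ₀ Ω)
    (e₀ : ℝ) (heig : ∀ x ∈ Ω, -laplacian Φ₀ x = e₀ * Φ₀ x)
    (φ : EuclideanSpace ℝ (Fin d) → ℝ)
    (hφC2 : ContDiffOn ℝ 2 φ Ω)
    (hφpos : ∀ x ∈ Ω, 0 < φ x)
    (hint₁ : IntegrableOn (fun x => Φ₀ x * laplacian φ x) Ω)
    (hint₂ : IntegrableOn (fun x => φ x * laplacian Φ₀ x) Ω)
    (hint₃ : IntegrableOn (fun x => Φ₀ x * φ x) Ω)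
    (hgreen : ∫ x in Ω, Φ₀ x * laplacian φ x = ∫ x in Ω, φ x * laplacian Φ₀ x)
    (a b : ℝ)
    (hab : ∀ x ∈ Ω, a * φ x ≤ -laplacian φ x ∧ -laplacian φ x ≤ b * φ x) :
    a ≤ e₀ ∧ e₀ ≤ b := by
  have hmeas : MeasurableSet Ω := hΩo.measurableSet
  set I := ∫ x in Ω, Φ₀ x * φ x with hI
  -- I > 0
  have hIpos : 0 < I := by
    rw [hI]
    apply (setIntegral_pos_iff_support_of_nonneg_ae _ hint₃).2
    · have hne : Ω.Nonempty := hΩc.nonempty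
      have : Ω ⊆ Function.support (fun x => Φ₀ x * φ x) ∩ Ω := by
        intro x hx
        exact ⟨ne_of_gt (mul_pos (hΦ₀pos x hx) (hφpos x hx)), hx⟩
      calc 0 < volume Ω := hΩo.measure_pos volume hne
        _ ≤ volume (Function.support (fun x => Φ₀ x * φ x) ∩ Ω) := by
            rw [show volume (Function.support (fun x => Φ₀ x * φ x) ∩ Ω)
              = volume Ω from le_antisymm (measure_mono Set.inter_subset_right)
              (measure_mono this)]
    · filter_upwards [ae_restrict_mem hmeas] with x hx
      exact le_of_lt (mul_pos (hΦ₀pos x hx) (hφpos x hx))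
  -- ∫ φ ΔΦ₀ = -e₀ I
  have h1 : ∫ x in Ω, φ x * laplacian Φ₀ x = -e₀ * I := by
    rw [hI, ← integral_const_mul]
    apply setIntegral_congr_fun hmeas
    intro x hx
    have := heig x hx
    linear_combination (-φ x) * this
  have h2 : ∫ x in Ω, Φ₀ x * (-laplacian φ x) = e₀ * I := by
    rw [show (fun x => Φ₀ x * (-laplacian φ x)) = fun x => -(Φ₀ x * laplacian φ x) by
      funext x; ring]
    rw [integral_neg, hgreen, h1]; ring
  have hintneg : IntegrableOn (fun x => Φ₀ x * (-laplacian φ x)) Ω := by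
    have he : (fun x => Φ₀ x * (-laplacian φ x)) = fun x => -(Φ₀ x * laplacian φ x) := by
      funext x; ring
    rw [he]; exact hint₁.neg
  have ha : a * I ≤ e₀ * I := by
    rw [← h2, hI, ← integral_const_mul]
    apply setIntegral_mono_on (hint₃.const_mul a) hintneg hmeas
    intro x hx
    have h := (hab x hx).1
    have hp := hΦ₀pos x hx
    nlinarith
  have hb : e₀ * I ≤ b * I := by
    rw [← h2, hI, ← integral_const_mul]
    apply setIntegral_mono_on hintneg (hint₃.const_mul b) hmeas
    intro x hx
    have h := (hab x hx).2
    have hp := hΦ₀pos x hx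
    nlinarith
  exact ⟨le_of_mul_le_mul_right ha hIpos, le_of_mul_le_mul_right hb hIpos⟩
end

section
/- (Duffin–Barnsley–Thirring inequalities.) Let d ≥ 1 and let V : ℝ^d → ℝ. Let Φ₀ : ℝ^d → ℝ be twice continuously differentiable, nonnegative, integrable and not identically zero, satisfying −ΔΦ₀ + V Φ₀ = e₀ Φ₀ on ℝ^d for some real number e₀. Let φ : ℝ^d → ℝ be twice continuously differentiable with φ(x) > 0 for all x, such that Φ₀·Δφ, φ·ΔΦ₀, Φ₀·φ and Φ₀·V·φ are integrable and Green's identity ∫ Φ₀ Δφ = ∫ φ ΔΦ₀ holds. Then for all real numbers a, b such that a·φ(x) ≤ −Δφ(x) + V(x)φ(x) ≤ b·φ(x) for every x ∈ ℝ^d, one has a ≤ e₀ ≤ b; equivalently, inf(V − Δφ/φ) ≤ e₀ ≤ sup(V − Δφ/φ). -/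
open MeasureTheory

/-- **Duffin–Barnsley–Thirring inequalities.** Let `Φ₀ ≥ 0` be a `C²`,
integrable, not identically zero eigenfunction of the Schrödinger operator `−Δ + V` on
`ℝ^d` with eigenvalue `e₀`, and let `φ > 0` be `C²` with the stated integrability
conditions and Green's identity. If `a·φ ≤ −Δφ + Vφ ≤ b·φ` everywhere then
`a ≤ e₀ ≤ b`. -/
theorem duffin_barnsley_thirring {d : ℕ} (hd : 1 ≤ d)
    (V : EuclideanSpace ℝ (Fin d) → ℝ)
    (Φ₀ : EuclideanSpace ℝ (Fin d) → ℝ)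
    (hΦ₀C2 : ContDiff ℝ 2 Φ₀)
    (hΦ₀nonneg : ∀ x, 0 ≤ Φ₀ x)
    (hΦ₀int : Integrable Φ₀)
    (hΦ₀ne : Φ₀ ≠ 0)
    (e₀ : ℝ) (heig : ∀ x, -laplacian Φ₀ x + V x * Φ₀ x = e₀ * Φ₀ x)
    (φ : EuclideanSpace ℝ (Fin d) → ℝ)
    (hφC2 : ContDiff ℝ 2 φ)
    (hφpos : ∀ x, 0 < φ x)
    (hint₁ : Integrable (fun x => Φ₀ x * laplacian φ x))
    (hint₂ : Integrable (fun x => φ x * laplacian Φ₀ x))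
    (hint₃ : Integrable (fun x => Φ₀ x * φ x))
    (hint₄ : Integrable (fun x => Φ₀ x * V x * φ x))
    (hgreen : ∫ x, Φ₀ x * laplacian φ x = ∫ x, φ x * laplacian Φ₀ x)
    (a b : ℝ)
    (hab : ∀ x, a * φ x ≤ -laplacian φ x + V x * φ x ∧
      -laplacian φ x + V x * φ x ≤ b * φ x) :
    a ≤ e₀ ∧ e₀ ≤ b := by
  set I := ∫ x, Φ₀ x * φ x with hI
  have hcont : Continuous fun x => Φ₀ x * φ x := hΦ₀C2.continuous.mul hφC2.continuous
  have hnn : 0 ≤ fun x => Φ₀ x * φ x := fun x => mul_nonneg (hΦ₀nonneg x) (hφpos x).le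
  obtain ⟨x₀, hx₀⟩ : ∃ x, Φ₀ x ≠ 0 := Function.ne_iff.mp hΦ₀ne
  have hIpos : 0 < I := by
    rw [hI, integral_pos_iff_support_of_nonneg hnn hint₃]
    have hopen : IsOpen (Function.support fun x => Φ₀ x * φ x) :=
      isOpen_compl_singleton.preimage hcont
    refine hopen.measure_pos _ ⟨x₀, ?_⟩
    simp only [Function.mem_support]
    exact mul_ne_zero hx₀ (hφpos x₀).ne'
  -- the key integral identity
  have hf : Integrable (fun x => -(Φ₀ x * laplacian φ x) + Φ₀ x * V x * φ x) :=
    hint₁.neg.add hint₄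
  have hJ : (∫ x, (-(Φ₀ x * laplacian φ x) + Φ₀ x * V x * φ x)) = e₀ * I := by
    calc (∫ x, (-(Φ₀ x * laplacian φ x) + Φ₀ x * V x * φ x))
        = (∫ x, (Φ₀ x * V x * φ x - Φ₀ x * laplacian φ x)) := by
          congr 1; funext x; ring
      _ = (∫ x, Φ₀ x * V x * φ x) - ∫ x, Φ₀ x * laplacian φ x :=
          integral_sub hint₄ hint₁
      _ = (∫ x, Φ₀ x * V x * φ x) - ∫ x, φ x * laplacian Φ₀ x := by rw [hgreen]
      _ = ∫ x, (Φ₀ x * V x * φ x - φ x * laplacian Φ₀ x) :=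
          (integral_sub hint₄ hint₂).symm
      _ = ∫ x, e₀ * (Φ₀ x * φ x) := by
          congr 1; funext x; linear_combination φ x * heig x
      _ = e₀ * I := by rw [integral_const_mul]
  have ha : a * I ≤ e₀ * I := by
    rw [← hJ, hI, ← integral_const_mul]
    refine integral_mono (hint₃.const_mul a) hf fun x => ?_
    have h1 := mul_le_mul_of_nonneg_left (hab x).1 (hΦ₀nonneg x)
    nlinarith [h1]
  have hb : e₀ * I ≤ b * I := by
    rw [← hJ, hI, ← integral_const_mul]
    refine integral_mono hf (hint₃.const_mul b) fun x => ?_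
    have h1 := mul_le_mul_of_nonneg_left (hab x).2 (hΦ₀nonneg x)
    nlinarith [h1]
  exact ⟨le_of_mul_le_mul_right (by simpa [mul_comm] using ha) hIpos,
    le_of_mul_le_mul_right (by simpa [mul_comm] using hb) hIpos⟩
end

section
/- Let p₀, p₁, p₂ be three pairwise distinct points in a real inner product space, and let F₃(p₀, p₁, p₂) = cos∠(p₁, p₀, p₂) + cos∠(p₀, p₁, p₂) + cos∠(p₀, p₂, p₁) be the sum of the cosines of the three angles of the triangle they form. Then 1 ≤ F₃(p₀, p₁, p₂) ≤ 3/2. Moreover, F₃ = 1 when the three points are collinear, and F₃ = 3/2 when the three points form an equilateral triangle (all three pairwise distances equal). -/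
open scoped RealInnerProductSpace

/-- For three pairwise distinct points of a real inner product space,
the sum `F₃` of the cosines of the three angles of the triangle they form satisfies
`1 ≤ F₃ ≤ 3/2`; it equals `1` when the points are collinear and `3/2` when they form
an equilateral triangle. -/
theorem F3_bounds {E : Type*} [NormedAddCommGroup E] [InnerProductSpace ℝ E]
    (p₀ p₁ p₂ : E) (h01 : p₀ ≠ p₁) (h02 : p₀ ≠ p₂) (h12 : p₁ ≠ p₂)
    (F₃ : ℝ)
    (hF₃ : F₃ = ⟪p₁ - p₀, p₂ - p₀⟫ / (‖p₁ - p₀‖ * ‖p₂ - p₀‖)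
        + ⟪p₀ - p₁, p₂ - p₁⟫ / (‖p₀ - p₁‖ * ‖p₂ - p₁‖)
        + ⟪p₀ - p₂, p₁ - p₂⟫ / (‖p₀ - p₂‖ * ‖p₁ - p₂‖)) :
    (1 ≤ F₃ ∧ F₃ ≤ 3 / 2) ∧
    (Collinear ℝ {p₀, p₁, p₂} → F₃ = 1) ∧
    (dist p₀ p₁ = dist p₁ p₂ ∧ dist p₁ p₂ = dist p₀ p₂ → F₃ = 3 / 2) := by
  -- law of cosines form of the inner products
  have hin : ∀ x y z : E, ⟪y - x, z - x⟫ =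
      (dist x y ^ 2 + dist x z ^ 2 - dist y z ^ 2) / 2 := by
    intro x y z
    have h := @norm_sub_sq_real E _ _ (y - x) (z - x)
    rw [show y - x - (z - x) = y - z by abel] at h
    simp only [dist_eq_norm]
    rw [show ‖x - y‖ = ‖y - x‖ from norm_sub_rev _ _,
        show ‖x - z‖ = ‖z - x‖ from norm_sub_rev _ _]
    linarith
  set a : ℝ := dist p₁ p₂ with ha
  set b : ℝ := dist p₀ p₂ with hb
  set c : ℝ := dist p₀ p₁ with hc
  have hapos : 0 < a := dist_pos.2 h12
  have hbpos : 0 < b := dist_pos.2 h02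
  have hcpos : 0 < c := dist_pos.2 h01
  -- triangle inequalities
  have t1 : a ≤ b + c := by
    have := dist_triangle p₁ p₀ p₂
    rw [dist_comm p₁ p₀] at this; linarith
  have t2 : b ≤ a + c := by
    have := dist_triangle p₀ p₁ p₂
    linarith
  have t3 : c ≤ a + b := by
    have := dist_triangle p₀ p₂ p₁
    rw [dist_comm p₂ p₁] at this; linarith
  -- rewrite F₃
  have hF : F₃ = (c ^ 2 + b ^ 2 - a ^ 2) / (2 * (c * b))
      + (c ^ 2 + a ^ 2 - b ^ 2) / (2 * (c * a))
      + (b ^ 2 + a ^ 2 - c ^ 2) / (2 * (b * a)) := by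
    rw [hF₃, hin p₀ p₁ p₂, hin p₁ p₀ p₂, hin p₂ p₀ p₁]
    rw [dist_comm p₁ p₀, dist_comm p₂ p₀, dist_comm p₂ p₁]
    simp only [← dist_eq_norm, dist_comm p₁ p₀, dist_comm p₂ p₀, dist_comm p₂ p₁,
      ← ha, ← hb, ← hc]
    ring
  -- the key identity
  have key : F₃ * (2 * (a * b * c)) = 2 * (a * b * c)
      + (a + b - c) * (b + c - a) * (c + a - b) := by
    rw [hF]
    field_simp
    ring
  have habc : (0:ℝ) < 2 * (a * b * c) := by positivity
  refine ⟨⟨?_, ?_⟩, ?_, ?_⟩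
  · -- 1 ≤ F₃
    have hprod : 0 ≤ (a + b - c) * (b + c - a) * (c + a - b) := by
      have h1 : 0 ≤ a + b - c := by linarith
      have h2 : 0 ≤ b + c - a := by linarith
      have h3 : 0 ≤ c + a - b := by linarith
      positivity
    nlinarith [key, habc]
  · -- F₃ ≤ 3/2 (Schur)
    have h1 : 0 ≤ a + b - c := by linarith
    have h2 : 0 ≤ b + c - a := by linarith
    have h3 : 0 ≤ c + a - b := by linarith
    nlinarith [key, habc, mul_nonneg h1 (sq_nonneg (a - b)),
      mul_nonneg h2 (sq_nonneg (b - c)), mul_nonneg h3 (sq_nonneg (c - a))]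
  · -- collinear case
    intro hcol
    have hzero : (a + b - c) * (b + c - a) * (c + a - b) = 0 := by
      rcases hcol.wbtw_or_wbtw_or_wbtw with h | h | h
      · -- Wbtw p₀ p₁ p₂ : c + a = b
        have hd := h.dist_add_dist
        rw [← hc, ← ha, ← hb] at hd
        have hz : c + a - b = 0 := by linarith
        rw [hz]; ring
      · -- Wbtw p₁ p₂ p₀ : a + b = c
        have hd := h.dist_add_dist
        rw [dist_comm p₂ p₀, dist_comm p₁ p₀, ← ha, ← hb, ← hc] at hd
        have hz : a + b - c = 0 := by linarith
        rw [hz]; ring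
      · -- Wbtw p₂ p₀ p₁ : b + c = a
        have hd := h.dist_add_dist
        rw [dist_comm p₂ p₀, dist_comm p₂ p₁, ← hb, ← hc, ← ha] at hd
        have hz : b + c - a = 0 := by linarith
        rw [hz]; ring
    have : F₃ * (2 * (a * b * c)) = 1 * (2 * (a * b * c)) := by
      rw [key, hzero]; ring
    exact mul_right_cancel₀ (ne_of_gt habc) this
  · -- equilateral case
    rintro ⟨e1, e2⟩
    rw [hF, e1, e2]
    field_simp
    ring
end

section
/- Let N ≥ 3 and let p₀, …, p_{N−1} be pairwise distinct points in a real inner product space. Then the angular function satisfies F_N(p) ≥ N(N−1)(N−2)/6, and equality F_N(p) = N(N−1)(N−2)/6 holds when all N points are collinear (lie on a common affine line). -/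
open scoped RealInnerProductSpace

/-- The angular function `F_N`: the sum, over all triples consisting of a vertex index
`i` and an unordered pair `{j, k}` of indices distinct from `i` and from each other, of
the cosine of the angle at `p i` between `p j` and `p k`. -/
noncomputable def angularF {E : Type*} [NormedAddCommGroup E] [InnerProductSpace ℝ E]
    {N : ℕ} (p : Fin N → E) : ℝ :=
  ∑ i : Fin N, ∑ j ∈ Finset.univ.filter (· ≠ i),
    ∑ k ∈ Finset.univ.filter (fun k => j < k ∧ k ≠ i),
      ⟪p j - p i, p k - p i⟫ / (‖p j - p i‖ * ‖p k - p i‖)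

set_option linter.unusedSectionVars false


lemma sum_triples {N : ℕ} (f : Fin N → Fin N → Fin N → ℝ) :
    (∑ i : Fin N, ∑ j ∈ Finset.univ.filter (· ≠ i),
      ∑ k ∈ Finset.univ.filter (fun k => j < k ∧ k ≠ i), f i j k)
    = ∑ t ∈ Finset.univ.filter
        (fun t : Fin N × Fin N × Fin N => t.1 < t.2.1 ∧ t.2.1 < t.2.2),
        (f t.1 t.2.1 t.2.2 + f t.2.1 t.1 t.2.2 + f t.2.2 t.1 t.2.1) := by
  classical
  set D := Finset.univ.filter
      (fun t : Fin N × Fin N × Fin N => t.2.1 ≠ t.1 ∧ (t.2.1 < t.2.2 ∧ t.2.2 ≠ t.1)) with hD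
  set S := Finset.univ.filter
      (fun t : Fin N × Fin N × Fin N => t.1 < t.2.1 ∧ t.2.1 < t.2.2) with hS
  have step1 : (∑ i : Fin N, ∑ j ∈ Finset.univ.filter (· ≠ i),
      ∑ k ∈ Finset.univ.filter (fun k => j < k ∧ k ≠ i), f i j k)
      = ∑ t ∈ D, f t.1 t.2.1 t.2.2 := by
    rw [hD, Finset.sum_filter, Fintype.sum_prod_type]
    refine Finset.sum_congr rfl fun i _ => ?_
    rw [Fintype.sum_prod_type, Finset.sum_filter]
    refine Finset.sum_congr rfl fun j _ => ?_
    rw [Finset.sum_filter]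
    by_cases hji : j ≠ i
    · simp [hji]
    · simp [hji]
  rw [step1]
  have split1 := Finset.sum_filter_add_sum_filter_not D (fun t => t.1 < t.2.1)
      (fun t => f t.1 t.2.1 t.2.2)
  have split2 := Finset.sum_filter_add_sum_filter_not
      (D.filter (fun t => ¬ t.1 < t.2.1)) (fun t => t.1 < t.2.2)
      (fun t => f t.1 t.2.1 t.2.2)
  have hA : D.filter (fun t => t.1 < t.2.1) = S := by
    ext ⟨a, b, c⟩
    simp only [hD, hS, Finset.mem_filter, Finset.mem_univ, true_and, ne_eq,
      Fin.lt_def, Fin.ext_iff]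
    omega
  have hB : ∑ t ∈ (D.filter (fun t => ¬ t.1 < t.2.1)).filter (fun t => t.1 < t.2.2),
      f t.1 t.2.1 t.2.2 = ∑ t ∈ S, f t.2.1 t.1 t.2.2 := by
    refine Finset.sum_nbij' (fun t => (t.2.1, t.1, t.2.2)) (fun t => (t.2.1, t.1, t.2.2))
      ?_ ?_ ?_ ?_ ?_
    · rintro ⟨a, b, c⟩ h
      simp only [hD, hS, Finset.mem_filter, Finset.mem_univ, true_and, ne_eq,
        Fin.lt_def, Fin.ext_iff] at h ⊢
      omega
    · rintro ⟨a, b, c⟩ h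
      simp only [hD, hS, Finset.mem_filter, Finset.mem_univ, true_and, ne_eq,
        Fin.lt_def, Fin.ext_iff] at h ⊢
      omega
    · rintro ⟨a, b, c⟩ _; rfl
    · rintro ⟨a, b, c⟩ _; rfl
    · rintro ⟨a, b, c⟩ _; rfl
  have hC : ∑ t ∈ (D.filter (fun t => ¬ t.1 < t.2.1)).filter (fun t => ¬ t.1 < t.2.2),
      f t.1 t.2.1 t.2.2 = ∑ t ∈ S, f t.2.2 t.1 t.2.1 := by
    refine Finset.sum_nbij' (fun t => (t.2.1, t.2.2, t.1)) (fun t => (t.2.2, t.1, t.2.1))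
      ?_ ?_ ?_ ?_ ?_
    · rintro ⟨a, b, c⟩ h
      simp only [hD, hS, Finset.mem_filter, Finset.mem_univ, true_and, ne_eq,
        Fin.lt_def, Fin.ext_iff] at h ⊢
      omega
    · rintro ⟨a, b, c⟩ h
      simp only [hD, hS, Finset.mem_filter, Finset.mem_univ, true_and, ne_eq,
        Fin.lt_def, Fin.ext_iff] at h ⊢
      omega
    · rintro ⟨a, b, c⟩ _; rfl
    · rintro ⟨a, b, c⟩ _; rfl
    · rintro ⟨a, b, c⟩ _; rfl
  have hA' : ∑ t ∈ D.filter (fun t => t.1 < t.2.1), f t.1 t.2.1 t.2.2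
      = ∑ t ∈ S, f t.1 t.2.1 t.2.2 := by rw [hA]
  rw [Finset.sum_add_distrib, Finset.sum_add_distrib]
  linarith [split1, split2, hA', hB, hC]

lemma sort3 {α : Type*} [LinearOrder α] [DecidableEq α] (a b c : α)
    (hab : a ≠ b) (hac : a ≠ c) (hbc : b ≠ c) :
    ∃ x y z : α, x < y ∧ y < z ∧ ({x, y, z} : Finset α) = {a, b, c} := by
  rcases lt_or_gt_of_ne hab with h1 | h1 <;> rcases lt_or_gt_of_ne hac with h2 | h2 <;>
    rcases lt_or_gt_of_ne hbc with h3 | h3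
  · exact ⟨a, b, c, h1, h3, rfl⟩
  · exact ⟨a, c, b, h2, h3, by ext w; simp; tauto⟩
  · exact absurd (h1.trans h3) (not_lt.mpr h2.le)
  · exact ⟨c, a, b, h2, h1, by ext w; simp; tauto⟩
  · exact ⟨b, a, c, h1, h2, by ext w; simp; tauto⟩
  · exact absurd (h2.trans h3) (not_lt.mpr h1.le)
  · exact ⟨b, c, a, h3, h2, by ext w; simp; tauto⟩
  · exact ⟨c, b, a, h3, h1, by ext w; simp; tauto⟩

lemma card_S {N : ℕ} :
    (Finset.univ.filter
      (fun t : Fin N × Fin N × Fin N => t.1 < t.2.1 ∧ t.2.1 < t.2.2)).card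
      = N.choose 3 := by
  classical
  have hb : (Finset.univ.filter
      (fun t : Fin N × Fin N × Fin N => t.1 < t.2.1 ∧ t.2.1 < t.2.2)).card
      = (Finset.powersetCard 3 (Finset.univ : Finset (Fin N))).card := by
    refine Finset.card_bij (fun t _ => ({t.1, t.2.1, t.2.2} : Finset (Fin N))) ?_ ?_ ?_
    · rintro ⟨a, b, c⟩ ht
      simp only [Finset.mem_filter, Finset.mem_univ, true_and] at ht
      obtain ⟨h1, h2⟩ := ht
      rw [Finset.mem_powersetCard]
      refine ⟨Finset.subset_univ _, ?_⟩
      exact Finset.card_eq_three.mpr ⟨a, b, c, h1.ne, (h1.trans h2).ne, h2.ne, rfl⟩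
    · rintro ⟨a, b, c⟩ h1 ⟨a', b', c'⟩ h2 h
      simp only [Finset.mem_filter, Finset.mem_univ, true_and, Fin.lt_def] at h1 h2
      replace h : ({a, b, c} : Finset (Fin N)) = {a', b', c'} := h
      have k1 : a ∈ ({a', b', c'} : Finset (Fin N)) := by rw [← h]; simp
      have k2 : b ∈ ({a', b', c'} : Finset (Fin N)) := by rw [← h]; simp
      have k3 : c ∈ ({a', b', c'} : Finset (Fin N)) := by rw [← h]; simp
      have k4 : a' ∈ ({a, b, c} : Finset (Fin N)) := by rw [h]; simp
      have k5 : b' ∈ ({a, b, c} : Finset (Fin N)) := by rw [h]; simp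
      have k6 : c' ∈ ({a, b, c} : Finset (Fin N)) := by rw [h]; simp
      simp only [Finset.mem_insert, Finset.mem_singleton, Fin.ext_iff] at k1 k2 k3 k4 k5 k6
      simp only [Prod.mk.injEq, Fin.ext_iff]
      omega
    · intro s hs
      rw [Finset.mem_powersetCard] at hs
      obtain ⟨a, b, c, hab, hac, hbc, rfl⟩ := Finset.card_eq_three.mp hs.2
      obtain ⟨x, y, z, hxy, hyz, hxyz⟩ := sort3 a b c hab hac hbc
      exact ⟨(x, y, z), by simp [Finset.mem_filter, hxy, hyz], hxyz⟩
  rw [hb, Finset.card_powersetCard, Finset.card_fin]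

lemma choose3_cast {N : ℕ} (hN : 3 ≤ N) :
    (N.choose 3 : ℝ) = (N : ℝ) * ((N : ℝ) - 1) * ((N : ℝ) - 2) / 6 := by
  have hd : N.descFactorial 3 = (N - 2) * ((N - 1) * (N * 1)) := rfl
  have hfc : N.descFactorial 3 = 6 * N.choose 3 := by
    rw [Nat.descFactorial_eq_factorial_mul_choose]; norm_num [Nat.factorial]
  have key : ((6 * N.choose 3 : ℕ) : ℝ) = (N : ℝ) * ((N : ℝ) - 1) * ((N : ℝ) - 2) := by
    rw [← hfc, hd]
    push_cast [Nat.cast_sub (show 1 ≤ N by omega), Nat.cast_sub (show 2 ≤ N by omega)]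
    ring
  push_cast at key
  linarith
lemma abs_helper (s t : ℝ) : (|t|+|s|-|s-t|)*(|s|+|s-t|-|t|)*(|s-t|+|t|-|s|) = 0 := by
  rcases abs_cases s with ⟨hs, hs'⟩ | ⟨hs, hs'⟩ <;>
  rcases abs_cases t with ⟨ht, ht'⟩ | ⟨ht, ht'⟩ <;>
  rcases abs_cases (s-t) with ⟨hst, hst'⟩ | ⟨hst, hst'⟩ <;>
  rw [hs, ht, hst] <;> first | (exfalso; linarith) | ring

lemma real_tri (x y z : ℝ) (hx : 0<x) (hy : 0<y) (hz : 0<z)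
    (h1 : x ≤ y+z) (h2 : y ≤ x+z) (h3 : z ≤ x+y) :
    1 ≤ (y^2+z^2-x^2)/(2*y*z) + (x^2+z^2-y^2)/(2*x*z) + (x^2+y^2-z^2)/(2*x*y) := by
  have key : (y^2+z^2-x^2)/(2*y*z) + (x^2+z^2-y^2)/(2*x*z) + (x^2+y^2-z^2)/(2*x*y) - 1
      = ((y+z-x)*(z+x-y)*(x+y-z))/(2*x*y*z) := by field_simp; ring
  nlinarith [div_nonneg (mul_nonneg (mul_nonneg (by linarith : (0:ℝ) ≤ y+z-x)
    (by linarith : (0:ℝ) ≤ z+x-y)) (by linarith : (0:ℝ) ≤ x+y-z))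
    (by positivity : (0:ℝ) ≤ 2*x*y*z)]

lemma real_tri_eq (x y z : ℝ) (hx : 0<x) (hy : 0<y) (hz : 0<z)
    (h : (y+z-x)*(z+x-y)*(x+y-z) = 0) :
    (y^2+z^2-x^2)/(2*y*z) + (x^2+z^2-y^2)/(2*x*z) + (x^2+y^2-z^2)/(2*x*y) = 1 := by
  have key : (y^2+z^2-x^2)/(2*y*z) + (x^2+z^2-y^2)/(2*x*z) + (x^2+y^2-z^2)/(2*x*y) - 1
      = ((y+z-x)*(z+x-y)*(x+y-z))/(2*x*y*z) := by field_simp; ring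
  rw [h] at key; simp at key; linarith

section Geom
variable {E : Type*} [NormedAddCommGroup E] [InnerProductSpace ℝ E]

lemma tri_ineq (a b c : E) : ‖a - c‖ ≤ ‖a - b‖ + ‖b - c‖ := by
  simpa [dist_eq_norm] using dist_triangle a b c

lemma inner_eq_sq (u v w : E) :
    ⟪v-u, w-u⟫ = (‖u-v‖^2 + ‖w-u‖^2 - ‖v-w‖^2)/2 := by
  have h := norm_sub_sq_real (v-u) (w-u)
  have h2 : (v-u)-(w-u) = v - w := by abel
  rw [h2] at h
  rw [norm_sub_rev u v]
  linarith

lemma tri_ge (u v w : E) (h1 : u ≠ v) (h2 : u ≠ w) (h3 : v ≠ w) :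
    1 ≤ ⟪v-u,w-u⟫/(‖v-u‖*‖w-u‖) + ⟪u-v,w-v⟫/(‖u-v‖*‖w-v‖)
      + ⟪u-w,v-w⟫/(‖u-w‖*‖v-w‖) := by
  have e1 : ⟪v-u, w-u⟫ = (‖u-v‖^2 + ‖w-u‖^2 - ‖v-w‖^2)/2 := inner_eq_sq u v w
  have e2 : ⟪u-v, w-v⟫ = (‖u-v‖^2 + ‖v-w‖^2 - ‖w-u‖^2)/2 := by
    have h := inner_eq_sq v u w
    rw [norm_sub_rev v u, norm_sub_rev w v, norm_sub_rev u w] at h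
    exact h
  have e3 : ⟪u-w, v-w⟫ = (‖w-u‖^2 + ‖v-w‖^2 - ‖u-v‖^2)/2 := inner_eq_sq w u v
  have hx : 0 < ‖v - w‖ := norm_sub_pos_iff.mpr h3
  have hy : 0 < ‖w - u‖ := norm_sub_pos_iff.mpr (Ne.symm h2)
  have hz : 0 < ‖u - v‖ := norm_sub_pos_iff.mpr h1
  have t1 : ‖v - w‖ ≤ ‖w - u‖ + ‖u - v‖ := by
    have h := tri_ineq v u w
    rw [norm_sub_rev v u, norm_sub_rev u w] at h; linarith
  have t2 : ‖w - u‖ ≤ ‖v - w‖ + ‖u - v‖ := by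
    have h := tri_ineq w v u
    rw [norm_sub_rev w v, norm_sub_rev v u] at h; linarith
  have t3 : ‖u - v‖ ≤ ‖v - w‖ + ‖w - u‖ := by
    have h := tri_ineq u w v
    rw [norm_sub_rev u w, norm_sub_rev w v] at h; linarith
  rw [e1, e2, e3, norm_sub_rev v u, norm_sub_rev w v, norm_sub_rev u w]
  have H := real_tri (‖v-w‖) (‖w-u‖) (‖u-v‖) hx hy hz t1 t2 t3
  have q : (‖u-v‖^2 + ‖w-u‖^2 - ‖v-w‖^2)/2/(‖u-v‖*‖w-u‖)
      + (‖u-v‖^2 + ‖v-w‖^2 - ‖w-u‖^2)/2/(‖u-v‖*‖v-w‖)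
      + (‖w-u‖^2 + ‖v-w‖^2 - ‖u-v‖^2)/2/(‖w-u‖*‖v-w‖)
      = (‖w-u‖^2+‖u-v‖^2-‖v-w‖^2)/(2*‖w-u‖*‖u-v‖)
      + (‖v-w‖^2+‖u-v‖^2-‖w-u‖^2)/(2*‖v-w‖*‖u-v‖)
      + (‖v-w‖^2+‖w-u‖^2-‖u-v‖^2)/(2*‖v-w‖*‖w-u‖) := by
    rw [div_div, div_div, div_div]; ring
  rw [q]
  exact H
lemma tri_col (u v w : E) (h1 : u ≠ v) (h2 : u ≠ w) (h3 : v ≠ w)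
    (hc : Collinear ℝ ({u, v, w} : Set E)) :
    ⟪v-u,w-u⟫/(‖v-u‖*‖w-u‖) + ⟪u-v,w-v⟫/(‖u-v‖*‖w-v‖)
      + ⟪u-w,v-w⟫/(‖u-w‖*‖v-w‖) = 1 := by
  have e1 : ⟪v-u, w-u⟫ = (‖u-v‖^2 + ‖w-u‖^2 - ‖v-w‖^2)/2 := inner_eq_sq u v w
  have e2 : ⟪u-v, w-v⟫ = (‖u-v‖^2 + ‖v-w‖^2 - ‖w-u‖^2)/2 := by
    have h := inner_eq_sq v u w
    rw [norm_sub_rev v u, norm_sub_rev w v, norm_sub_rev u w] at h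
    exact h
  have e3 : ⟪u-w, v-w⟫ = (‖w-u‖^2 + ‖v-w‖^2 - ‖u-v‖^2)/2 := inner_eq_sq w u v
  have hx : 0 < ‖v - w‖ := norm_sub_pos_iff.mpr h3
  have hy : 0 < ‖w - u‖ := norm_sub_pos_iff.mpr (Ne.symm h2)
  have hz : 0 < ‖u - v‖ := norm_sub_pos_iff.mpr h1
  obtain ⟨d, hd⟩ := (collinear_iff_of_mem (Set.mem_insert u {v, w})).mp hc
  obtain ⟨s, hsv⟩ := hd v (by simp)
  obtain ⟨t, htw⟩ := hd w (by simp)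
  rw [vadd_eq_add] at hsv htw
  have hvu : v - u = s • d := by rw [hsv]; abel
  have hwu : w - u = t • d := by rw [htw]; abel
  have hvw : v - w = (s - t) • d := by rw [hsv, htw, sub_smul]; abel
  have hXn : ‖v - w‖ = |s - t| * ‖d‖ := by rw [hvw, norm_smul, Real.norm_eq_abs]
  have hYn : ‖w - u‖ = |t| * ‖d‖ := by rw [hwu, norm_smul, Real.norm_eq_abs]
  have hZn : ‖u - v‖ = |s| * ‖d‖ := by
    rw [norm_sub_rev u v, hvu, norm_smul, Real.norm_eq_abs]
  have hprod : (‖w-u‖ + ‖u-v‖ - ‖v-w‖) * (‖u-v‖ + ‖v-w‖ - ‖w-u‖)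
      * (‖v-w‖ + ‖w-u‖ - ‖u-v‖) = 0 := by
    rw [hXn, hYn, hZn]
    linear_combination (‖d‖^3) * abs_helper s t
  have H := real_tri_eq (‖v-w‖) (‖w-u‖) (‖u-v‖) hx hy hz hprod
  rw [e1, e2, e3, norm_sub_rev v u, norm_sub_rev w v, norm_sub_rev u w]
  have q : (‖u-v‖^2 + ‖w-u‖^2 - ‖v-w‖^2)/2/(‖u-v‖*‖w-u‖)
      + (‖u-v‖^2 + ‖v-w‖^2 - ‖w-u‖^2)/2/(‖u-v‖*‖v-w‖)
      + (‖w-u‖^2 + ‖v-w‖^2 - ‖u-v‖^2)/2/(‖w-u‖*‖v-w‖)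
      = (‖w-u‖^2+‖u-v‖^2-‖v-w‖^2)/(2*‖w-u‖*‖u-v‖)
      + (‖v-w‖^2+‖u-v‖^2-‖w-u‖^2)/(2*‖v-w‖*‖u-v‖)
      + (‖v-w‖^2+‖w-u‖^2-‖u-v‖^2)/(2*‖v-w‖*‖w-u‖) := by
    rw [div_div, div_div, div_div]; ring
  rw [q]
  exact H
end Geom

/-- For `N ≥ 3` pairwise distinct points of a real inner product
space, `F_N(p) ≥ N(N−1)(N−2)/6`, with equality when the points are collinear. -/
theorem angularF_lower_bound {E : Type*} [NormedAddCommGroup E] [InnerProductSpace ℝ E]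
    {N : ℕ} (hN : 3 ≤ N) (p : Fin N → E)
    (hp : ∀ i j : Fin N, i ≠ j → p i ≠ p j) :
    (N : ℝ) * ((N : ℝ) - 1) * ((N : ℝ) - 2) / 6 ≤ angularF p ∧
    (Collinear ℝ (Set.range p) →
      angularF p = (N : ℝ) * ((N : ℝ) - 1) * ((N : ℝ) - 2) / 6) := by
  classical
  have repr : angularF p = ∑ t ∈ Finset.univ.filter
      (fun t : Fin N × Fin N × Fin N => t.1 < t.2.1 ∧ t.2.1 < t.2.2),
      ((fun i j k => ⟪p j - p i, p k - p i⟫ / (‖p j - p i‖ * ‖p k - p i‖)) t.1 t.2.1 t.2.2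
        + (fun i j k => ⟪p j - p i, p k - p i⟫ / (‖p j - p i‖ * ‖p k - p i‖)) t.2.1 t.1 t.2.2
        + (fun i j k => ⟪p j - p i, p k - p i⟫ / (‖p j - p i‖ * ‖p k - p i‖)) t.2.2 t.1 t.2.1) :=
    sum_triples (fun i j k => ⟪p j - p i, p k - p i⟫ / (‖p j - p i‖ * ‖p k - p i‖))
  simp only at repr
  have hchoose := choose3_cast hN
  have hcardS := card_S (N := N)
  have hdistinct : ∀ t : Fin N × Fin N × Fin N, t ∈ Finset.univ.filter
      (fun t : Fin N × Fin N × Fin N => t.1 < t.2.1 ∧ t.2.1 < t.2.2) →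
      p t.1 ≠ p t.2.1 ∧ p t.1 ≠ p t.2.2 ∧ p t.2.1 ≠ p t.2.2 := by
    rintro ⟨a, b, c⟩ ht
    simp only [Finset.mem_filter, Finset.mem_univ, true_and] at ht
    exact ⟨hp a b ht.1.ne, hp a c (ht.1.trans ht.2).ne, hp b c ht.2.ne⟩
  constructor
  · calc (N : ℝ) * ((N : ℝ) - 1) * ((N : ℝ) - 2) / 6
        = (N.choose 3 : ℝ) := hchoose.symm
      _ = ((Finset.univ.filter
            (fun t : Fin N × Fin N × Fin N => t.1 < t.2.1 ∧ t.2.1 < t.2.2)).card : ℝ) := by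
          rw [hcardS]
      _ = ∑ _t ∈ Finset.univ.filter
            (fun t : Fin N × Fin N × Fin N => t.1 < t.2.1 ∧ t.2.1 < t.2.2), (1 : ℝ) := by
          simp
      _ ≤ _ := Finset.sum_le_sum (fun t ht => ?_)
      _ = angularF p := repr.symm
    obtain ⟨d1, d2, d3⟩ := hdistinct t ht
    exact tri_ge (p t.1) (p t.2.1) (p t.2.2) d1 d2 d3
  · intro hcol
    have heq : ∀ t ∈ Finset.univ.filter
        (fun t : Fin N × Fin N × Fin N => t.1 < t.2.1 ∧ t.2.1 < t.2.2),
        ⟪p t.2.1 - p t.1, p t.2.2 - p t.1⟫ / (‖p t.2.1 - p t.1‖ * ‖p t.2.2 - p t.1‖)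
        + ⟪p t.1 - p t.2.1, p t.2.2 - p t.2.1⟫ / (‖p t.1 - p t.2.1‖ * ‖p t.2.2 - p t.2.1‖)
        + ⟪p t.1 - p t.2.2, p t.2.1 - p t.2.2⟫ / (‖p t.1 - p t.2.2‖ * ‖p t.2.1 - p t.2.2‖)
        = 1 := by
      intro t ht
      obtain ⟨d1, d2, d3⟩ := hdistinct t ht
      refine tri_col (p t.1) (p t.2.1) (p t.2.2) d1 d2 d3 ?_
      refine Collinear.subset ?_ hcol
      intro x hx
      simp only [Set.mem_insert_iff, Set.mem_singleton_iff] at hx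
      rcases hx with rfl | rfl | rfl <;> exact Set.mem_range_self _
    rw [repr, Finset.sum_congr rfl heq, Finset.sum_const, hcardS]
    simp only [nsmul_eq_mul, mul_one]
    rw [hchoose]
end

section
/- Let N ≥ 3 and let p₀, …, p_{N−1} be pairwise distinct points in a real inner product space. Then the angular function satisfies F_N(p) ≤ N(N−1)(N−2)/4. -/
open scoped RealInnerProductSpace
open Finset EuclideanGeometry

lemma add_sub_mul_add_sub_mul_add_sub_le_of_le {a b c : ℝ} (hc : 0 ≤ c) (hba : b ≤ a)
    (hcb : c ≤ b) : (a + b - c) * (b + c - a) * (c + a - b) ≤ a * b * c := by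
  -- the difference is `(a - b)² (a + b - c) + c (a - c) (b - c)`
  nlinarith [mul_nonneg (sq_nonneg (a - b)) (by linarith : 0 ≤ a + b - c),
    mul_nonneg (mul_nonneg hc (sub_nonneg.2 (hcb.trans hba))) (sub_nonneg.2 hcb)]

/-- Schur's inequality of degree one. -/
lemma add_sub_mul_add_sub_mul_add_sub_le {a b c : ℝ} (ha : 0 ≤ a) (hb : 0 ≤ b) (hc : 0 ≤ c) :
    (a + b - c) * (b + c - a) * (c + a - b) ≤ a * b * c := by
  rcases le_total a b with h₁ | h₁ <;> rcases le_total b c with h₂ | h₂ <;>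
    rcases le_total a c with h₃ | h₃
  all_goals first
    | linarith [add_sub_mul_add_sub_mul_add_sub_le_of_le hc h₁ h₂]
    | linarith [add_sub_mul_add_sub_mul_add_sub_le_of_le hb h₃ h₂]
    | linarith [add_sub_mul_add_sub_mul_add_sub_le_of_le hc h₁ h₃]
    | linarith [add_sub_mul_add_sub_mul_add_sub_le_of_le ha h₂ h₃]
    | linarith [add_sub_mul_add_sub_mul_add_sub_le_of_le hb h₃ h₁]
    | linarith [add_sub_mul_add_sub_mul_add_sub_le_of_le ha h₂ h₁]

lemma cos_angle_add_cos_angle_add_cos_angle_le {V P : Type*} [NormedAddCommGroup V]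
    [InnerProductSpace ℝ V] [MetricSpace P] [NormedAddTorsor V P] {A B C : P}
    (hAB : A ≠ B) (hBC : B ≠ C) (hCA : C ≠ A) :
    Real.cos (∠ B A C) + Real.cos (∠ C B A) + Real.cos (∠ A C B) ≤ 3 / 2 := by
  have lawA := law_cos B A C
  have lawB := law_cos C B A
  have lawC := law_cos A C B
  rw [dist_comm B A] at lawA
  rw [dist_comm C B] at lawB
  rw [dist_comm A C] at lawC
  set a := dist B C
  set b := dist C A
  set c := dist A B
  have ha : 0 < a := dist_pos.2 hBC
  have hb : 0 < b := dist_pos.2 hCA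
  have hc : 0 < c := dist_pos.2 hAB
  -- by the law of cosines, `2abc (cos A + cos B + cos C) = 2abc + (a+b-c)(b+c-a)(c+a-b)`
  have key : 2 * (a * b * c) * (Real.cos (∠ B A C) + Real.cos (∠ C B A) + Real.cos (∠ A C B))
      ≤ 2 * (a * b * c) * (3 / 2) := by
    linear_combination add_sub_mul_add_sub_mul_add_sub_le ha.le hb.le hc.le
      + a * lawA + b * lawB + c * lawC
  exact le_of_mul_le_mul_left key (by positivity)

section DistinctTriples

variable {ι M : Type*} [Fintype ι] [DecidableEq ι] [AddCommMonoid M]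

variable (ι) in
def distinctTriples : Finset (ι × ι × ι) :=
  {t | t.1 ≠ t.2.1 ∧ t.1 ≠ t.2.2 ∧ t.2.1 ≠ t.2.2}

lemma mem_distinctTriples {i j k : ι} :
    (i, j, k) ∈ distinctTriples ι ↔ i ≠ j ∧ i ≠ k ∧ j ≠ k := by
  simp [distinctTriples]

lemma card_distinctTriples {R : Type*} [CommRing R] :
    ((distinctTriples ι).card : R) =
      Fintype.card ι * (Fintype.card ι - 1) * (Fintype.card ι - 2) := by
  have sum_third {i j : ι} (hij : i ≠ j) :
      ∑ k, (if i ≠ j ∧ i ≠ k ∧ j ≠ k then (1 : R) else 0) = Fintype.card ι - 2 := by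
    have : ({k | i ≠ k ∧ j ≠ k} : Finset ι) = (univ.erase i).erase j := by
      ext k; simp [eq_comm]; tauto
    simp only [hij, ne_eq, not_false_eq_true, true_and, sum_boole, this]
    rw [cast_card_erase_of_mem (by simp [hij.symm]), cast_card_erase_of_mem (mem_univ _),
      card_univ]
    ring
  calc ((distinctTriples ι).card : R)
      = ∑ i : ι, ∑ j : ι, ∑ k : ι, if i ≠ j ∧ i ≠ k ∧ j ≠ k then (1 : R) else 0 := by
        simp only [distinctTriples, cast_card, sum_filter, Fintype.sum_prod_type]
    _ = ∑ i : ι, ∑ j ∈ univ.erase i, (Fintype.card ι - 2 : R) := by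
        refine sum_congr rfl fun i _ => ?_
        rw [← sum_erase univ (a := i) (by simp)]
        exact sum_congr rfl fun j hj => sum_third (ne_of_mem_erase hj).symm
    _ = _ := by
        simp only [sum_const, nsmul_eq_mul, cast_card_erase_of_mem (mem_univ _), card_univ]
        ring

lemma sum_distinctTriples_rotate (f : ι → ι → ι → M) :
    ∑ t ∈ distinctTriples ι, f t.2.1 t.2.2 t.1 = ∑ t ∈ distinctTriples ι, f t.1 t.2.1 t.2.2 := by
  refine sum_nbij' (fun t => (t.2.1, t.2.2, t.1)) (fun t => (t.2.2, t.1, t.2.1)) ?_ ?_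
    (fun _ _ => rfl) (fun _ _ => rfl) (fun _ _ => rfl) <;>
  · rintro ⟨i, j, k⟩; simp only [mem_distinctTriples]; tauto

lemma sum_distinctTriples_cyclic (f : ι → ι → ι → M) :
    ∑ t ∈ distinctTriples ι, (f t.1 t.2.1 t.2.2 + f t.2.1 t.2.2 t.1 + f t.2.2 t.1 t.2.1)
      = 3 • ∑ t ∈ distinctTriples ι, f t.1 t.2.1 t.2.2 := by
  have h₁ := sum_distinctTriples_rotate f
  have h₂ := sum_distinctTriples_rotate fun i j k => f k i j
  rw [sum_add_distrib, sum_add_distrib, h₁, ← h₂]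
  abel

lemma two_nsmul_sum_lt_eq_sum_distinctTriples [LinearOrder ι] (f : ι → ι → ι → M)
    (hf : ∀ i j k, f i j k = f i k j) :
    2 • ∑ i, ∑ j ∈ ({j | j ≠ i} : Finset ι), ∑ k ∈ ({k | j < k ∧ k ≠ i} : Finset ι), f i j k
      = ∑ t ∈ distinctTriples ι, f t.1 t.2.1 t.2.2 := by
  have sum_lt : ∑ i, ∑ j ∈ ({j | j ≠ i} : Finset ι),
      ∑ k ∈ ({k | j < k ∧ k ≠ i} : Finset ι), f i j k
      = ∑ t ∈ distinctTriples ι with t.2.1 < t.2.2, f t.1 t.2.1 t.2.2 := by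
    simp only [distinctTriples, filter_filter, sum_filter, Fintype.sum_prod_type]
    refine sum_congr rfl fun i _ => sum_congr rfl fun j _ => ?_
    by_cases hji : j = i
    · simp [hji]
    · simp only [hji, if_true, ne_eq, not_false_eq_true]
      refine sum_congr rfl fun k _ => if_congr ?_ rfl rfl
      exact ⟨fun ⟨hjk, hki⟩ => ⟨⟨Ne.symm hji, Ne.symm hki, hjk.ne⟩, hjk⟩,
        fun ⟨⟨_, hik, _⟩, hjk⟩ => ⟨hjk, Ne.symm hik⟩⟩
  have sum_not_lt : ∑ t ∈ distinctTriples ι with ¬ t.2.1 < t.2.2, f t.1 t.2.1 t.2.2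
      = ∑ t ∈ distinctTriples ι with t.2.1 < t.2.2, f t.1 t.2.1 t.2.2 := by
    refine sum_nbij' (fun t => (t.1, t.2.2, t.2.1)) (fun t => (t.1, t.2.2, t.2.1)) ?_ ?_
      (fun _ _ => rfl) (fun _ _ => rfl) (fun t _ => hf _ _ _)
    all_goals
      rintro ⟨i, j, k⟩
      simp only [mem_filter, mem_distinctTriples, not_lt]
      rintro ⟨⟨hij, hik, hjk⟩, h⟩
      refine ⟨⟨hik, hij, Ne.symm hjk⟩, ?_⟩
    · exact lt_of_le_of_ne h (Ne.symm hjk)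
    · exact h.le
  rw [← sum_filter_add_sum_filter_not (distinctTriples ι) (fun t => t.2.1 < t.2.2),
    sum_not_lt, sum_lt, two_nsmul]

end DistinctTriples

lemma angularF_eq_sum_cos_angle {E : Type*} [NormedAddCommGroup E] [InnerProductSpace ℝ E]
    {N : ℕ} (p : Fin N → E) :
    angularF p = ∑ i, ∑ j ∈ ({j | j ≠ i} : Finset (Fin N)),
      ∑ k ∈ ({k | j < k ∧ k ≠ i} : Finset (Fin N)), Real.cos (∠ (p j) (p i) (p k)) := by
  simp only [angularF, EuclideanGeometry.angle, InnerProductGeometry.cos_angle, vsub_eq_sub]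

theorem angularF_upper_bound_general {E : Type*} [NormedAddCommGroup E] [InnerProductSpace ℝ E]
    {N : ℕ} (p : Fin N → E)
    (hp : ∀ i j : Fin N, i ≠ j → p i ≠ p j) :
    angularF p ≤ (N : ℝ) * ((N : ℝ) - 1) * ((N : ℝ) - 2) / 4 := by
  set c : Fin N → Fin N → Fin N → ℝ := fun i j k => Real.cos (∠ (p j) (p i) (p k))
  have two_nsmul_eq : 2 • angularF p = ∑ t ∈ distinctTriples (Fin N), c t.1 t.2.1 t.2.2 := by
    rw [angularF_eq_sum_cos_angle]
    exact two_nsmul_sum_lt_eq_sum_distinctTriples c fun i j k => by simp only [c, angle_comm]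
  have three_nsmul_le : 3 • ∑ t ∈ distinctTriples (Fin N), c t.1 t.2.1 t.2.2
      ≤ (distinctTriples (Fin N)).card • (3 / 2 : ℝ) := by
    rw [← sum_distinctTriples_cyclic]
    refine sum_le_card_nsmul _ _ _ fun ⟨i, j, k⟩ h => ?_
    obtain ⟨hij, hik, hjk⟩ := mem_distinctTriples.1 h
    exact cos_angle_add_cos_angle_add_cos_angle_le (hp i j hij) (hp j k hjk) (hp k i hik.symm)
  rw [← two_nsmul_eq] at three_nsmul_le
  simp only [nsmul_eq_mul, card_distinctTriples, Fintype.card_fin, Nat.cast_ofNat]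
    at three_nsmul_le
  linarith

/-- For `N ≥ 3` pairwise distinct points of a real inner product
space, `F_N(p) ≤ N(N−1)(N−2)/4`. -/
theorem angularF_upper_bound {E : Type*} [NormedAddCommGroup E] [InnerProductSpace ℝ E]
    {N : ℕ} (hN : 3 ≤ N) (p : Fin N → E)
    (hp : ∀ i j : Fin N, i ≠ j → p i ≠ p j) :
    angularF p ≤ (N : ℝ) * ((N : ℝ) - 1) * ((N : ℝ) - 2) / 4 :=
  angularF_upper_bound_general p hp
end

section
/- Let E be a real inner product space and let N ≥ M ≥ 3 be integers. Suppose c is a real number such that F_M(q) ≤ c for every M-tuple q of pairwise distinct points of E. Then for every N-tuple p of pairwise distinct points of E, F_N(p) ≤ [N(N−1)(N−2) / (M(M−1)(M−2))] · c. -/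
open scoped RealInnerProductSpace

/-!
Average over the `M`-point sub-configurations of `p`. Each term of `F_N(p)` involves three
distinct indices, so it occurs in exactly `C(N-3, M-3)` of the `C(N, M)` sub-configurations.
Summing the bound `F_M ≤ c` over all of them gives `C(N-3, M-3) F_N(p) ≤ C(N, M) c`, and
`C(N, M) / C(N-3, M-3) = N(N-1)(N-2) / (M(M-1)(M-2))`.
-/

open Finset EuclideanGeometry

theorem Nat.cast_descFactorial_three {R : Type*} [CommRing R] (n : ℕ) :
    (n.descFactorial 3 : R) = n * (n - 1) * (n - 2) := by
  rcases n with _ | _ | n <;> simp [Nat.descFactorial_succ]; ring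

theorem Nat.choose_mul_descFactorial_three {N M : ℕ} (hM : 3 ≤ M) :
    N.choose M * M.descFactorial 3 = N.descFactorial 3 * (N - 3).choose (M - 3) := by
  simp only [Nat.descFactorial_eq_factorial_mul_choose, mul_left_comm _ (Nat.factorial 3),
    Nat.choose_mul hM, mul_assoc]

theorem Nat.cast_choose_div_choose_sub_three {K : Type*} [Field K] [CharZero K] {N M : ℕ}
    (hM : 3 ≤ M) (hMN : M ≤ N) :
    (N.choose M : K) / (N - 3).choose (M - 3)
      = N * (N - 1) * (N - 2) / (M * (M - 1) * (M - 2)) := by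
  have hchoose : ((N - 3).choose (M - 3) : K) ≠ 0 :=
    Nat.cast_ne_zero.2 (Nat.choose_pos (by omega)).ne'
  have hdesc : (M.descFactorial 3 : K) ≠ 0 :=
    Nat.cast_ne_zero.2 (by simp only [ne_eq, Nat.descFactorial_eq_zero_iff_lt]; omega)
  rw [← Nat.cast_descFactorial_three, ← Nat.cast_descFactorial_three,
    div_eq_div_iff hchoose hdesc]
  exact_mod_cast Nat.choose_mul_descFactorial_three hM

theorem sum_powersetCard_sum_sum_sum {α β : Type*} [DecidableEq α] [AddCommMonoid β]
    {s : Finset α} {M : ℕ} (hM : 3 ≤ M) (g : α → α → α → β)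
    (hg : ∀ i j k, g i j k ≠ 0 → i ≠ j ∧ i ≠ k ∧ j ≠ k) :
    ∑ S ∈ s.powersetCard M, ∑ i ∈ S, ∑ j ∈ S, ∑ k ∈ S, g i j k
      = (#s - 3).choose (M - 3) • ∑ i ∈ s, ∑ j ∈ s, ∑ k ∈ s, g i j k := by
  let vertices : α × α × α → Finset α := fun x => {x.1, x.2.1, x.2.2}
  have hmem : ∀ (S : Finset α) (x : α × α × α), x ∈ S ×ˢ S ×ˢ S ↔ vertices x ⊆ S := by
    simp [vertices, insert_subset_iff]
  calc ∑ S ∈ s.powersetCard M, ∑ i ∈ S, ∑ j ∈ S, ∑ k ∈ S, g i j k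
      = ∑ S ∈ s.powersetCard M, ∑ x ∈ S ×ˢ S ×ˢ S, g x.1 x.2.1 x.2.2 := by
        simp only [sum_product]
    _ = ∑ x ∈ s ×ˢ s ×ˢ s, ∑ S ∈ (s.powersetCard M).filter (vertices x ⊆ ·),
          g x.1 x.2.1 x.2.2 := by
        refine sum_comm' fun S x => ?_
        simp only [mem_filter, mem_powersetCard, hmem]
        exact ⟨fun h => ⟨⟨h.1, h.2⟩, h.2.trans h.1.1⟩, fun h => ⟨h.1.1, h.1.2⟩⟩
    _ = ∑ x ∈ s ×ˢ s ×ˢ s, (#s - 3).choose (M - 3) • g x.1 x.2.1 x.2.2 := by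
        refine sum_congr rfl fun x hx => ?_
        by_cases hx0 : g x.1 x.2.1 x.2.2 = 0
        · simp [hx0]
        obtain ⟨h12, h13, h23⟩ := hg _ _ _ hx0
        have hcard : #(vertices x) = 3 := by simp [vertices, card_insert_of_notMem, *]
        rw [sum_const,
          card_filter_powersetCard_subset _ _ _ ((hmem s x).1 hx) (hcard ▸ hM), hcard]
    _ = (#s - 3).choose (M - 3) • ∑ i ∈ s, ∑ j ∈ s, ∑ k ∈ s, g i j k := by
        rw [← smul_sum]
        simp only [sum_product]

section Angular

variable {E ι : Type*} [NormedAddCommGroup E] [InnerProductSpace ℝ E] [LinearOrder ι]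

noncomputable def angularTerm (p : ι → E) (i j k : ι) : ℝ :=
  if j ≠ i ∧ j < k ∧ k ≠ i then Real.cos (∠ (p j) (p i) (p k)) else 0

noncomputable def angularSum (p : ι → E) (S : Finset ι) : ℝ :=
  ∑ i ∈ S, ∑ j ∈ S, ∑ k ∈ S, angularTerm p i j k

theorem angularTerm_ne_zero {p : ι → E} {i j k : ι} (h : angularTerm p i j k ≠ 0) :
    i ≠ j ∧ i ≠ k ∧ j ≠ k := by
  unfold angularTerm at h
  split_ifs at h with hijk
  · exact ⟨hijk.1.symm, hijk.2.2.symm, hijk.2.1.ne⟩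
  · exact absurd rfl h

theorem angularSum_comp_orderEmbedding {κ : Type*} [LinearOrder κ] (e : ι ↪o κ) (p : κ → E)
    (S : Finset ι) : angularSum (p ∘ e) S = angularSum p (S.map e.toEmbedding) := by
  simp [angularSum, angularTerm, sum_map, e.lt_iff_lt]

theorem angularF_eq_angularSum_univ {N : ℕ} (p : Fin N → E) :
    angularF p = angularSum p univ := by
  simp only [angularF, angularSum, angularTerm, sum_filter, ite_and, EuclideanGeometry.angle,
    InnerProductGeometry.cos_angle, vsub_eq_sub]
  simp [sum_ite_irrel]

theorem angularSum_eq_angularF {N M : ℕ} (p : Fin N → E) {S : Finset (Fin N)} (hS : #S = M) :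
    angularSum p S = angularF (p ∘ S.orderEmbOfFin hS) := by
  rw [angularF_eq_angularSum_univ, angularSum_comp_orderEmbedding, map_orderEmbOfFin_univ]

theorem sum_powersetCard_angularSum (p : ι → E) (s : Finset ι) {M : ℕ} (hM : 3 ≤ M) :
    ∑ S ∈ s.powersetCard M, angularSum p S = (#s - 3).choose (M - 3) • angularSum p s :=
  sum_powersetCard_sum_sum_sum hM _ fun _ _ _ => angularTerm_ne_zero

end Angular

/-- If `F_M ≤ c` for every `M`-tuple of pairwise distinct points of
`E`, then every `N`-tuple `p` of pairwise distinct points (`N ≥ M ≥ 3`) satisfies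
`F_N(p) ≤ (N(N−1)(N−2)/(M(M−1)(M−2))) · c`. -/
theorem angularF_sup_monotone {E : Type*} [NormedAddCommGroup E] [InnerProductSpace ℝ E]
    {N M : ℕ} (hM : 3 ≤ M) (hMN : M ≤ N) (c : ℝ)
    (hc : ∀ q : Fin M → E, (∀ i j : Fin M, i ≠ j → q i ≠ q j) → angularF q ≤ c)
    (p : Fin N → E) (hp : ∀ i j : Fin N, i ≠ j → p i ≠ p j) :
    angularF p ≤ ((N : ℝ) * ((N : ℝ) - 1) * ((N : ℝ) - 2))
      / ((M : ℝ) * ((M : ℝ) - 1) * ((M : ℝ) - 2)) * c := by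
  have hsub : ∀ S ∈ univ.powersetCard M, angularSum p S ≤ c := fun S hS => by
    have hS := (mem_powersetCard.1 hS).2
    rw [angularSum_eq_angularF p hS]
    exact hc _ fun i j hij => hp _ _ ((S.orderEmbOfFin hS).injective.ne hij)
  have hsum := sum_le_card_nsmul _ _ c hsub
  rw [sum_powersetCard_angularSum p univ hM, card_powersetCard, card_univ, Fintype.card_fin,
    nsmul_eq_mul, nsmul_eq_mul, ← angularF_eq_angularSum_univ] at hsum
  have hpos : (0 : ℝ) < (N - 3).choose (M - 3) := by exact_mod_cast Nat.choose_pos (by omega)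
  rw [← Nat.cast_choose_div_choose_sub_three hM hMN, div_mul_eq_mul_div, le_div_iff₀ hpos,
    mul_comm]
  exact hsum
end

section
/- Let p₀, p₁, p₂, p₃ be four pairwise distinct points in a real inner product space. Then F₄(p) ≤ 6. Moreover, if all six pairwise distances ‖p_i − p_j‖ (i < j) are equal (the points form a regular tetrahedron), then F₄(p) = 6. -/
open scoped RealInnerProductSpace

/-- The three cosines of a triangle sum to `3/2 - ‖u+v+w‖²/2` where `u, v, w` are the
unit vectors along the (cyclically ordered) edges. -/
lemma tri_identity {E : Type*} [NormedAddCommGroup E] [InnerProductSpace ℝ E]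
    (a b c : E) (hab : b - a ≠ 0) (hbc : c - b ≠ 0) (hca : a - c ≠ 0) :
    ⟪b-a, c-a⟫/(‖b-a‖*‖c-a‖) + ⟪a-b, c-b⟫/(‖a-b‖*‖c-b‖) + ⟪a-c, b-c⟫/(‖a-c‖*‖b-c‖)
      = 3/2 - ‖‖b-a‖⁻¹ • (b-a) + ‖c-b‖⁻¹ • (c-b) + ‖a-c‖⁻¹ • (a-c)‖^2 / 2 := by
  set x := b - a with hx
  set y := c - b with hy
  set z := a - c with hz
  have h1 : c - a = -z := by simp [hz, neg_sub]
  have h2 : a - b = -x := by simp [hx, neg_sub]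
  have h3 : b - c = -y := by simp [hy, neg_sub]
  have hnx : (0:ℝ) < ‖x‖ := norm_pos_iff.mpr hab
  have hny : (0:ℝ) < ‖y‖ := norm_pos_iff.mpr hbc
  have hnz : (0:ℝ) < ‖z‖ := norm_pos_iff.mpr hca
  rw [h1, h2, h3]
  have expand : ‖‖x‖⁻¹ • x + ‖y‖⁻¹ • y + ‖z‖⁻¹ • z‖^2
      = 3 + 2 * (⟪x,y⟫/(‖x‖*‖y‖) + ⟪x,z⟫/(‖x‖*‖z‖) + ⟪y,z⟫/(‖y‖*‖z‖)) := by
    rw [← real_inner_self_eq_norm_sq]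
    simp only [inner_add_left, inner_add_right, real_inner_smul_left,
      real_inner_smul_right, real_inner_self_eq_norm_sq]
    rw [real_inner_comm y x, real_inner_comm z x, real_inner_comm z y]
    have hux : ‖‖x‖⁻¹ • x‖ = 1 := by
      rw [norm_smul, norm_inv, norm_norm, inv_mul_cancel₀ hnx.ne']
    have huy : ‖‖y‖⁻¹ • y‖ = 1 := by
      rw [norm_smul, norm_inv, norm_norm, inv_mul_cancel₀ hny.ne']
    have huz : ‖‖z‖⁻¹ • z‖ = 1 := by
      rw [norm_smul, norm_inv, norm_norm, inv_mul_cancel₀ hnz.ne']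
    rw [hux, huy, huz]
    field_simp
    ring
  rw [expand]
  simp only [inner_neg_left, inner_neg_right, norm_neg]
  rw [real_inner_comm z x, real_inner_comm z y]
  field_simp
  ring

/-- The sum of the cosines of the three angles of a (possibly degenerate) triangle is
at most `3/2`. -/
lemma tri_le {E : Type*} [NormedAddCommGroup E] [InnerProductSpace ℝ E]
    (a b c : E) (hab : b - a ≠ 0) (hbc : c - b ≠ 0) (hca : a - c ≠ 0) :
    ⟪b-a, c-a⟫/(‖b-a‖*‖c-a‖) + ⟪a-b, c-b⟫/(‖a-b‖*‖c-b‖) + ⟪a-c, b-c⟫/(‖a-c‖*‖b-c‖)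
      ≤ 3/2 := by
  rw [tri_identity a b c hab hbc hca]
  have := sq_nonneg ‖‖b-a‖⁻¹ • (b-a) + ‖c-b‖⁻¹ • (c-b) + ‖a-c‖⁻¹ • (a-c)‖
  linarith

/-- For an equilateral triangle the sum of the cosines of the three angles is `3/2`. -/
lemma tri_eq {E : Type*} [NormedAddCommGroup E] [InnerProductSpace ℝ E]
    (a b c : E) (hab : b - a ≠ 0) (hbc : c - b ≠ 0) (hca : a - c ≠ 0)
    (e1 : ‖b-a‖ = ‖c-b‖) (e2 : ‖c-b‖ = ‖a-c‖) :
    ⟪b-a, c-a⟫/(‖b-a‖*‖c-a‖) + ⟪a-b, c-b⟫/(‖a-b‖*‖c-b‖) + ⟪a-c, b-c⟫/(‖a-c‖*‖b-c‖)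
      = 3/2 := by
  rw [tri_identity a b c hab hbc hca]
  have hzero : ‖b-a‖⁻¹ • (b-a) + ‖c-b‖⁻¹ • (c-b) + ‖a-c‖⁻¹ • (a-c) = 0 := by
    rw [← e1, ← e2, ← e1, ← smul_add, ← smul_add]
    have : (b - a) + (c - b) + (a - c) = 0 := by abel
    rw [this, smul_zero]
  rw [hzero, norm_zero]
  norm_num

/-- For four pairwise distinct points of a real inner product space,
`F₄(p) ≤ 6`, with equality when all six pairwise distances are equal
(a regular tetrahedron). -/
theorem angularF_four_bound {E : Type*} [NormedAddCommGroup E] [InnerProductSpace ℝ E]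
    (p : Fin 4 → E) (hp : ∀ i j : Fin 4, i ≠ j → p i ≠ p j) :
    angularF p ≤ 6 ∧
    ((∀ i j k l : Fin 4, i ≠ j → k ≠ l → dist (p i) (p j) = dist (p k) (p l)) →
      angularF p = 6) := by
  have hne : ∀ i j : Fin 4, i ≠ j → p i - p j ≠ 0 := fun i j h =>
    sub_ne_zero_of_ne (hp i j h)
  have key : angularF p =
      (⟪p 1 - p 0, p 2 - p 0⟫/(‖p 1 - p 0‖*‖p 2 - p 0‖)
        + ⟪p 0 - p 1, p 2 - p 1⟫/(‖p 0 - p 1‖*‖p 2 - p 1‖)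
        + ⟪p 0 - p 2, p 1 - p 2⟫/(‖p 0 - p 2‖*‖p 1 - p 2‖))
      + (⟪p 1 - p 0, p 3 - p 0⟫/(‖p 1 - p 0‖*‖p 3 - p 0‖)
        + ⟪p 0 - p 1, p 3 - p 1⟫/(‖p 0 - p 1‖*‖p 3 - p 1‖)
        + ⟪p 0 - p 3, p 1 - p 3⟫/(‖p 0 - p 3‖*‖p 1 - p 3‖))
      + (⟪p 2 - p 0, p 3 - p 0⟫/(‖p 2 - p 0‖*‖p 3 - p 0‖)
        + ⟪p 0 - p 2, p 3 - p 2⟫/(‖p 0 - p 2‖*‖p 3 - p 2‖)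
        + ⟪p 0 - p 3, p 2 - p 3⟫/(‖p 0 - p 3‖*‖p 2 - p 3‖))
      + (⟪p 2 - p 1, p 3 - p 1⟫/(‖p 2 - p 1‖*‖p 3 - p 1‖)
        + ⟪p 1 - p 2, p 3 - p 2⟫/(‖p 1 - p 2‖*‖p 3 - p 2‖)
        + ⟪p 1 - p 3, p 2 - p 3⟫/(‖p 1 - p 3‖*‖p 2 - p 3‖)) := by
    simp only [angularF, Finset.sum_filter, Fin.sum_univ_four]
    norm_num [Fin.lt_def, Fin.ext_iff, show ((3:Fin 4):ℕ) = 3 from rfl]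
    ring
  constructor
  · have t1 := tri_le (p 0) (p 1) (p 2) (hne 1 0 (by decide)) (hne 2 1 (by decide))
      (hne 0 2 (by decide))
    have t2 := tri_le (p 0) (p 1) (p 3) (hne 1 0 (by decide)) (hne 3 1 (by decide))
      (hne 0 3 (by decide))
    have t3 := tri_le (p 0) (p 2) (p 3) (hne 2 0 (by decide)) (hne 3 2 (by decide))
      (hne 0 3 (by decide))
    have t4 := tri_le (p 1) (p 2) (p 3) (hne 2 1 (by decide)) (hne 3 2 (by decide))
      (hne 1 3 (by decide))
    rw [key]; linarith
  · intro h
    have hd : ∀ i j k l : Fin 4, i ≠ j → k ≠ l → ‖p i - p j‖ = ‖p k - p l‖ := by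
      intro i j k l hij hkl
      simpa [dist_eq_norm] using h i j k l hij hkl
    have t1 := tri_eq (p 0) (p 1) (p 2) (hne 1 0 (by decide)) (hne 2 1 (by decide))
      (hne 0 2 (by decide)) (hd 1 0 2 1 (by decide) (by decide))
      (hd 2 1 0 2 (by decide) (by decide))
    have t2 := tri_eq (p 0) (p 1) (p 3) (hne 1 0 (by decide)) (hne 3 1 (by decide))
      (hne 0 3 (by decide)) (hd 1 0 3 1 (by decide) (by decide))
      (hd 3 1 0 3 (by decide) (by decide))
    have t3 := tri_eq (p 0) (p 2) (p 3) (hne 2 0 (by decide)) (hne 3 2 (by decide))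
      (hne 0 3 (by decide)) (hd 2 0 3 2 (by decide) (by decide))
      (hd 3 2 0 3 (by decide) (by decide))
    have t4 := tri_eq (p 1) (p 2) (p 3) (hne 2 1 (by decide)) (hne 3 2 (by decide))
      (hne 1 3 (by decide)) (hd 2 1 3 2 (by decide) (by decide))
      (hd 3 2 1 3 (by decide) (by decide))
    rw [key]; linarith
end

section
/- Let V : ℤ → ℝ be bounded and let H be the bounded self-adjoint operator on ℓ²(ℤ; ℂ) given by (Hφ)(q) = −φ(q+1) − φ(q−1) + V(q)·φ(q). Suppose e₀ := inf of the real spectrum of H is an eigenvalue of H (i.e. there is a nonzero ψ ∈ ℓ²(ℤ; ℂ) with Hψ = e₀ψ). Then for every φ ∈ ℓ²(ℤ) taking real strictly positive values φ(q) > 0 for all q ∈ ℤ, and for all real numbers a, b such that a·φ(q) ≤ −φ(q+1) − φ(q−1) + V(q)φ(q) ≤ b·φ(q) for every q ∈ ℤ, one has a ≤ e₀ ≤ b; equivalently inf_q(−(φ(q+1)+φ(q−1))/φ(q) + V(q)) ≤ e₀ ≤ sup_q(−(φ(q+1)+φ(q−1))/φ(q) + V(q)). -/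
/-!
For the lower bound, test the eigenvector against `φ`. By the triangle inequality the modulus
`|ψ|` of an eigenvector is a subsolution, `L|ψ| ≤ e₀|ψ|` where `L` is the difference expression
of `H` (Kato's inequality). Pairing with `φ > 0` and using the symmetry of `H`,
`a⟪|ψ|, φ⟫ ≤ ⟪|ψ|, Hφ⟫ = ⟪H|ψ|, φ⟫ ≤ e₀⟪|ψ|, φ⟫`, and `⟪|ψ|, φ⟫ > 0`.

The upper bound is variational: the spectrum of the self-adjoint `H` lies in `[e₀, ∞)`, so
`H ≥ e₀` in the continuous functional calculus order, whence `e₀‖φ‖² ≤ ⟪Hφ, φ⟫ ≤ b‖φ‖²`.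
-/

open scoped InnerProductSpace ENNReal

noncomputable section

namespace lp

variable {ι : Type*} {p : ℝ≥0∞}

def ofReal (f : lp (fun _ : ι => ℝ) p) : lp (fun _ : ι => ℂ) p :=
  ⟨fun i => f i, (lp.memℓp f).mono' fun i => by simp⟩

@[simp]
theorem ofReal_apply (f : lp (fun _ : ι => ℝ) p) (i : ι) : ofReal f i = f i := rfl

def pointwiseNorm {E : Type*} [NormedAddCommGroup E] (f : lp (fun _ : ι => E) p) :
    lp (fun _ : ι => ℝ) p :=
  ⟨fun i => ‖f i‖, (lp.memℓp f).norm⟩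

@[simp]
theorem pointwiseNorm_apply {E : Type*} [NormedAddCommGroup E] (f : lp (fun _ : ι => E) p)
    (i : ι) : pointwiseNorm f i = ‖f i‖ := rfl

variable {𝕜 : Type*} [RCLike 𝕜] {G : ι → Type*} [∀ i, NormedAddCommGroup (G i)]
  [∀ i, InnerProductSpace 𝕜 (G i)]

theorem re_inner_le_re_inner {f g f' g' : lp G 2}
    (h : ∀ i, RCLike.re ⟪f i, g i⟫_𝕜 ≤ RCLike.re ⟪f' i, g' i⟫_𝕜) :
    RCLike.re ⟪f, g⟫_𝕜 ≤ RCLike.re ⟪f', g'⟫_𝕜 :=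
  hasSum_le h (RCLike.hasSum_re 𝕜 (hasSum_inner f g)) (RCLike.hasSum_re 𝕜 (hasSum_inner f' g'))

theorem re_inner_pos {f g : lp G 2} (h : ∀ i, 0 ≤ RCLike.re ⟪f i, g i⟫_𝕜) {i : ι}
    (hi : 0 < RCLike.re ⟪f i, g i⟫_𝕜) : 0 < RCLike.re ⟪f, g⟫_𝕜 :=
  hasSum_lt (f := 0) h hi hasSum_zero (RCLike.hasSum_re 𝕜 (hasSum_inner f g))

end lp

theorem IsSelfAdjoint.mul_norm_sq_le_re_inner_apply {E : Type*} [NormedAddCommGroup E]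
    [InnerProductSpace ℂ E] [CompleteSpace E] {T : E →L[ℂ] E} (hT : IsSelfAdjoint T) {c : ℝ}
    (hc : ∀ r ∈ spectrum ℝ T, c ≤ r) (x : E) : c * ‖x‖ ^ 2 ≤ RCLike.re ⟪T x, x⟫_ℂ := by
  have hpos : (T - algebraMap ℝ (E →L[ℂ] E) c).IsPositive :=
    (algebraMap_le_iff_le_spectrum hT).mpr hc
  have := hpos.re_inner_nonneg_left x
  rw [sub_apply, inner_sub_left, map_sub, Algebra.algebraMap_eq_smul_one, smul_apply,
    one_apply_eq_self, RCLike.real_smul_eq_coe_smul (K := ℂ), inner_smul_real_left,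
    RCLike.smul_re, inner_self_eq_norm_sq] at this
  linarith

def discreteSchrodinger (V f : ℤ → ℝ) (q : ℤ) : ℝ := -f (q + 1) - f (q - 1) + V q * f q

def IsDiscreteSchrodingerOp (V : ℤ → ℝ)
    (H : lp (fun _ : ℤ => ℂ) 2 →L[ℂ] lp (fun _ : ℤ => ℂ) 2) : Prop :=
  ∀ (f : lp (fun _ : ℤ => ℂ) 2) (q : ℤ), (H f) q = -f (q + 1) - f (q - 1) + (V q : ℂ) * f q

namespace IsDiscreteSchrodingerOp

variable {V : ℤ → ℝ} {H : lp (fun _ : ℤ => ℂ) 2 →L[ℂ] lp (fun _ : ℤ => ℂ) 2}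

theorem apply_ofReal (hH : IsDiscreteSchrodingerOp V H) (f : lp (fun _ : ℤ => ℝ) 2) (q : ℤ) :
    H (lp.ofReal f) q = discreteSchrodinger V f q := by
  simp [hH _ q, discreteSchrodinger]

theorem discreteSchrodinger_norm_le (hH : IsDiscreteSchrodingerOp V H) {e : ℝ}
    {ψ : lp (fun _ : ℤ => ℂ) 2} (hψ : H ψ = (e : ℂ) • ψ) (q : ℤ) :
    discreteSchrodinger V (fun q => ‖ψ q‖) q ≤ e * ‖ψ q‖ := by
  have hrec : ψ (q + 1) + ψ (q - 1) = ((V q - e : ℝ) : ℂ) * ψ q := by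
    have := hH ψ q
    rw [hψ, lp.coeFn_smul, Pi.smul_apply, smul_eq_mul] at this
    push_cast
    linear_combination this
  have hnorm : |V q - e| * ‖ψ q‖ ≤ ‖ψ (q + 1)‖ + ‖ψ (q - 1)‖ :=
    calc |V q - e| * ‖ψ q‖ = ‖ψ (q + 1) + ψ (q - 1)‖ := by
          rw [hrec, norm_mul, Complex.norm_real, Real.norm_eq_abs]
      _ ≤ ‖ψ (q + 1)‖ + ‖ψ (q - 1)‖ := norm_add_le _ _
  have := mul_le_mul_of_nonneg_right (le_abs_self (V q - e)) (norm_nonneg (ψ q))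
  unfold discreteSchrodinger
  linarith

theorem le_eigenvalue (hH : IsDiscreteSchrodingerOp V H) (hsa : IsSelfAdjoint H) {e : ℝ}
    {ψ : lp (fun _ : ℤ => ℂ) 2} (hψ0 : ψ ≠ 0) (hψ : H ψ = (e : ℂ) • ψ)
    {φ : lp (fun _ : ℤ => ℝ) 2} (hφ : ∀ q, 0 < φ q) {a : ℝ}
    (ha : ∀ q, a * φ q ≤ discreteSchrodinger V φ q) : a ≤ e := by
  set χ := lp.ofReal (lp.pointwiseNorm ψ)
  obtain ⟨q₀, hq₀⟩ : ∃ q, ψ q ≠ 0 := by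
    by_contra! h
    exact hψ0 (lp.ext (funext h))
  have hpos : 0 < RCLike.re ⟪χ, lp.ofReal φ⟫_ℂ :=
    lp.re_inner_pos (fun q => by simpa [χ] using mul_nonneg (hφ q).le (norm_nonneg (ψ q)))
      (i := q₀) (by simpa [χ] using mul_pos (hφ q₀) (norm_pos_iff.mpr hq₀))
  refine le_of_mul_le_mul_right ?_ hpos
  calc a * RCLike.re ⟪χ, lp.ofReal φ⟫_ℂ = RCLike.re ⟪χ, (a : ℂ) • lp.ofReal φ⟫_ℂ := by
        rw [inner_smul_right]
        simp
    _ ≤ RCLike.re ⟪χ, H (lp.ofReal φ)⟫_ℂ := lp.re_inner_le_re_inner fun q => by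
        rw [lp.coeFn_smul]
        simp [χ, hH.apply_ofReal]
        exact mul_le_mul_of_nonneg_right (ha q) (norm_nonneg _)
    _ = RCLike.re ⟪H χ, lp.ofReal φ⟫_ℂ := by
        rw [← ContinuousLinearMap.adjoint_inner_right, hsa.adjoint_eq]
    _ ≤ RCLike.re ⟪(e : ℂ) • χ, lp.ofReal φ⟫_ℂ := lp.re_inner_le_re_inner fun q => by
        rw [lp.coeFn_smul]
        simp [χ, hH.apply_ofReal]
        exact mul_le_mul_of_nonneg_left (hH.discreteSchrodinger_norm_le hψ q) (hφ q).le
    _ = e * RCLike.re ⟪χ, lp.ofReal φ⟫_ℂ := by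
        rw [inner_smul_left, Complex.conj_ofReal]
        simp

theorem le_of_discreteSchrodinger_le (hH : IsDiscreteSchrodingerOp V H) (hsa : IsSelfAdjoint H)
    {c : ℝ} (hc : ∀ r ∈ spectrum ℝ H, c ≤ r) {φ : lp (fun _ : ℤ => ℝ) 2} (hφ : ∀ q, 0 < φ q)
    {b : ℝ} (hb : ∀ q, discreteSchrodinger V φ q ≤ b * φ q) : c ≤ b := by
  have hpos : 0 < ‖lp.ofReal φ‖ ^ 2 := by
    have : lp.ofReal φ ≠ 0 := fun h => (hφ 0).ne' (by simpa using congrArg (· 0) h)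
    positivity
  refine le_of_mul_le_mul_right ?_ hpos
  calc c * ‖lp.ofReal φ‖ ^ 2 ≤ RCLike.re ⟪H (lp.ofReal φ), lp.ofReal φ⟫_ℂ :=
        hsa.mul_norm_sq_le_re_inner_apply hc _
    _ ≤ RCLike.re ⟪(b : ℂ) • lp.ofReal φ, lp.ofReal φ⟫_ℂ := lp.re_inner_le_re_inner fun q => by
        rw [lp.coeFn_smul]
        simp [hH.apply_ofReal]
        exact mul_le_mul_of_nonneg_left (hb q) (hφ q).le
    _ = b * ‖lp.ofReal φ‖ ^ 2 := by
        simp [← inner_self_eq_norm_sq (𝕜 := ℂ)]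

end IsDiscreteSchrodingerOp

theorem discrete_schrodinger_bounds_general (V : ℤ → ℝ)
    (H : lp (fun _ : ℤ => ℂ) 2 →L[ℂ] lp (fun _ : ℤ => ℂ) 2)
    (hH : ∀ (f : lp (fun _ : ℤ => ℂ) 2) (q : ℤ),
      (H f) q = -f (q + 1) - f (q - 1) + (V q : ℂ) * f q)
    (hsa : IsSelfAdjoint H)
    (e₀ : ℝ) (he₀ : e₀ = sInf {r : ℝ | (r : ℂ) ∈ spectrum ℂ H})
    (heig : ∃ ψ : lp (fun _ : ℤ => ℂ) 2, ψ ≠ 0 ∧ H ψ = (e₀ : ℂ) • ψ)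
    (φ : lp (fun _ : ℤ => ℝ) 2) (hφpos : ∀ q : ℤ, 0 < φ q)
    (a b : ℝ)
    (hab : ∀ q : ℤ, a * φ q ≤ -φ (q + 1) - φ (q - 1) + V q * φ q ∧
      -φ (q + 1) - φ (q - 1) + V q * φ q ≤ b * φ q) :
    a ≤ e₀ ∧ e₀ ≤ b := by
  have hspec : ∀ r ∈ spectrum ℝ H, e₀ ≤ r := by
    have hset : {r : ℝ | (r : ℂ) ∈ spectrum ℂ H} = spectrum ℝ H := spectrum.preimage_algebraMap ℂ
    rw [he₀, hset]
    exact fun r hr => csInf_le (spectrum.isCompact H).bddBelow hr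
  obtain ⟨ψ, hψ0, hψ⟩ := heig
  exact ⟨IsDiscreteSchrodingerOp.le_eigenvalue hH hsa hψ0 hψ hφpos fun q => (hab q).1,
    IsDiscreteSchrodingerOp.le_of_discreteSchrodinger_le hH hsa hspec hφpos fun q => (hab q).2⟩

/-- Let `H` be the discrete Schrödinger operator
`(Hφ)(q) = −φ(q+1) − φ(q−1) + V(q)φ(q)` on `ℓ²(ℤ; ℂ)` with bounded potential `V`, and
suppose `e₀ := inf` of the real spectrum of `H` is an eigenvalue of `H`.  Then for every
strictly positive real `φ ∈ ℓ²(ℤ)` and all `a b : ℝ` with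
`a·φ(q) ≤ −φ(q+1) − φ(q−1) + V(q)φ(q) ≤ b·φ(q)` for all `q`, one has `a ≤ e₀ ≤ b`. -/
theorem discrete_schrodinger_bounds (V : ℤ → ℝ) (C : ℝ) (hV : ∀ q, |V q| ≤ C)
    (H : lp (fun _ : ℤ => ℂ) 2 →L[ℂ] lp (fun _ : ℤ => ℂ) 2)
    (hH : ∀ (f : lp (fun _ : ℤ => ℂ) 2) (q : ℤ),
      (H f) q = -f (q + 1) - f (q - 1) + (V q : ℂ) * f q)
    (hsa : IsSelfAdjoint H)
    (e₀ : ℝ) (he₀ : e₀ = sInf {r : ℝ | (r : ℂ) ∈ spectrum ℂ H})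
    (heig : ∃ ψ : lp (fun _ : ℤ => ℂ) 2, ψ ≠ 0 ∧ H ψ = (e₀ : ℂ) • ψ)
    (φ : lp (fun _ : ℤ => ℝ) 2) (hφpos : ∀ q : ℤ, 0 < φ q)
    (a b : ℝ)
    (hab : ∀ q : ℤ, a * φ q ≤ -φ (q + 1) - φ (q - 1) + V q * φ q ∧
      -φ (q + 1) - φ (q - 1) + V q * φ q ≤ b * φ q) :
    a ≤ e₀ ∧ e₀ ≤ b :=
  discrete_schrodinger_bounds_general V H hH hsa e₀ he₀ heig φ hφpos a b hab
end
end

section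
/- Let N ≥ 3 and let V : ℤ/Nℤ → ℝ. Let H be the real symmetric N × N matrix, indexed by ℤ/Nℤ, with entries H_{q,q} = V(q), H_{q,q+1} = H_{q,q−1} = −1 (indices modulo N), and all other entries zero, and let e₀ be the smallest eigenvalue of H. Then for every vector φ : ℤ/Nℤ → ℝ with φ(q) > 0 for all q, one has min_{q ∈ ℤ/Nℤ} [ −(φ(q+1) + φ(q−1))/φ(q) + V(q) ] ≤ e₀ ≤ max_{q ∈ ℤ/Nℤ} [ −(φ(q+1) + φ(q−1))/φ(q) + V(q) ]. -/
/-!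
The bracketed quantity is `(H φ) q / φ q`.

Lower bound: if `A` has nonpositive off-diagonal entries, `A v = μ v` and `q` maximises
`v q / φ q` (replacing `v` by `-v` if needed, so that this maximum `r` is positive), then
`r φ - v` is nonnegative and vanishes at `q`, so `(A (r φ - v)) q ≤ 0`, i.e. `(A φ) q ≤ μ φ q`.

Upper bound: the smallest eigenvalue of the symmetric matrix `H` is the minimum of its Rayleigh
quotient, hence at most `⟪H φ, φ⟫ / ‖φ‖² = ∑ (H φ) q * φ q / ∑ φ q ^ 2`, a weighted mean of the
ratios `(H φ) q / φ q`.
-/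

open Matrix

namespace Matrix

variable {n R : Type*} [Fintype n]

section OffDiagNonpos

theorem mulVec_apply_nonpos_of_offDiag_nonpos [Semiring R] [PartialOrder R] [IsOrderedRing R]
    {A : Matrix n n R} (hA : ∀ i j, i ≠ j → A i j ≤ 0) {w : n → R}
    (hw : 0 ≤ w) {i : n} (hwi : w i = 0) : (A *ᵥ w) i ≤ 0 :=
  Finset.sum_nonpos fun j _ => by
    rcases eq_or_ne i j with rfl | hij
    · simp [hwi]
    · exact mul_nonpos_of_nonpos_of_nonneg (hA i j hij) (hw j)

variable [Field R] [LinearOrder R] [IsStrictOrderedRing R] {A : Matrix n n R}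

theorem exists_mulVec_le_mul_of_mulVec_eq_smul (hA : ∀ i j, i ≠ j → A i j ≤ 0) {φ : n → R}
    (hφ : ∀ i, 0 < φ i) {μ : R} {v : n → R} (hv : v ≠ 0) (hAv : A *ᵥ v = μ • v) :
    ∃ i, (A *ᵥ φ) i ≤ μ * φ i := by
  suffices key : ∀ u : n → R, A *ᵥ u = μ • u → ∀ j, 0 < u j → ∃ i, (A *ᵥ φ) i ≤ μ * φ i by
    obtain ⟨j, hj⟩ := Function.ne_iff.mp hv
    rcases hj.lt_or_gt with hneg | hpos
    · exact key (-v) (by rw [mulVec_neg, hAv, smul_neg]) j (neg_pos.mpr hneg)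
    · exact key v hAv j hpos
  intro u hAu j hj
  obtain ⟨i, -, hi⟩ :=
    Finset.exists_max_image Finset.univ (fun k => u k / φ k) ⟨j, Finset.mem_univ j⟩
  set r := u i / φ i
  have hr : 0 < r := (div_pos hj (hφ j)).trans_le (hi j (Finset.mem_univ _))
  have hur : ∀ k, u k ≤ r * φ k := fun k => (div_le_iff₀ (hφ k)).mp (hi k (Finset.mem_univ _))
  have hui : u i = r * φ i := (div_mul_cancel₀ _ (hφ i).ne').symm
  have hgap := mulVec_apply_nonpos_of_offDiag_nonpos hA (w := r • φ - u) (i := i)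
    (fun k => sub_nonneg.mpr (hur k)) (by simp [hui])
  rw [mulVec_sub, mulVec_smul, hAu] at hgap
  simp only [Pi.sub_apply, Pi.smul_apply, smul_eq_mul, hui] at hgap
  exact ⟨i, le_of_mul_le_mul_left (by linarith) hr⟩

end OffDiagNonpos

theorem IsHermitian.exists_eigenvalue_mul_dotProduct_self_le [DecidableEq n] {A : Matrix n n ℝ}
    (hA : A.IsHermitian) {x : n → ℝ} (hx : x ≠ 0) :
    ∃ μ v, v ≠ 0 ∧ A *ᵥ v = μ • v ∧ μ * (x ⬝ᵥ x) ≤ x ⬝ᵥ (A *ᵥ x) := by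
  set T := A.toEuclideanLin
  set x' := WithLp.toLp 2 x
  have hx' : x' ≠ 0 := by simpa [x'] using hx
  have : Nontrivial (EuclideanSpace ℝ n) := nontrivial_of_ne x' 0 hx'
  obtain ⟨w, hw, hw0⟩ := (isSymmetric_toEuclideanLin_iff.mpr hA)
    |>.hasEigenvalue_iInf_of_finiteDimensional.exists_hasEigenvector
  refine ⟨_, WithLp.ofLp w, by simpa using hw0,
    congrArg WithLp.ofLp (Module.End.mem_eigenspace_iff.mp hw), ?_⟩
  have hbdd : BddBelow (Set.range fun y : {y : EuclideanSpace ℝ n // y ≠ 0} =>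
      RCLike.re (inner ℝ (T y) (y : EuclideanSpace ℝ n)) / ‖(y : EuclideanSpace ℝ n)‖ ^ 2) :=
    ⟨-‖LinearMap.toContinuousLinearMap T‖, Set.forall_mem_range.mpr fun y =>
      (abs_le.mp ((LinearMap.toContinuousLinearMap T).rayleighQuotient_le_norm y)).1⟩
  have hnorm : ‖x'‖ ^ 2 = x ⬝ᵥ x := by
    rw [← real_inner_self_eq_norm_sq, EuclideanSpace.inner_toLp_toLp, star_trivial]
  have hinner : RCLike.re (inner ℝ (T x') x') = x ⬝ᵥ (A *ᵥ x) := by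
    rw [RCLike.re_to_real, ← star_trivial (A *ᵥ x)]
    exact EuclideanSpace.inner_toLp_toLp (A *ᵥ x) x
  rw [← hnorm, ← hinner]
  exact (le_div_iff₀ (by positivity)).mp (ciInf_le hbdd ⟨x', hx'⟩)

theorem IsHermitian.exists_eigenvalue_mul_le_mulVec [DecidableEq n] [Nonempty n] {A : Matrix n n ℝ}
    (hA : A.IsHermitian) {φ : n → ℝ} (hφ : ∀ i, 0 < φ i) :
    ∃ μ v, v ≠ 0 ∧ A *ᵥ v = μ • v ∧ ∃ i, μ * φ i ≤ (A *ᵥ φ) i := by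
  have hφ0 : φ ≠ 0 := fun h => (hφ (Classical.arbitrary n)).ne' (congrFun h _)
  obtain ⟨μ, v, hv, hAv, hle⟩ := hA.exists_eigenvalue_mul_dotProduct_self_le hφ0
  refine ⟨μ, v, hv, hAv, ?_⟩
  by_contra! hlt
  have : φ ⬝ᵥ (A *ᵥ φ) < μ * (φ ⬝ᵥ φ) := by
    simp only [dotProduct, Finset.mul_sum]
    exact Finset.sum_lt_sum_of_nonempty Finset.univ_nonempty fun i _ => by nlinarith [hlt i, hφ i]
  linarith

end Matrix

def cyclicSchrodinger (N : ℕ) (V : ZMod N → ℝ) : Matrix (ZMod N) (ZMod N) ℝ :=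
  of fun q q' => if q' = q then V q else if q' = q + 1 ∨ q' = q - 1 then -1 else 0

section CyclicSchrodinger

variable {N : ℕ} (V : ZMod N → ℝ)

theorem cyclicSchrodinger_isHermitian : (cyclicSchrodinger N V).IsHermitian := by
  ext i j
  have hadj : (i = j + 1 ∨ i = j - 1) ↔ (j = i + 1 ∨ j = i - 1) := by
    rw [eq_sub_iff_add_eq, eq_sub_iff_add_eq, eq_comm (b := j + 1), eq_comm (b := i + 1)]
    tauto
  by_cases hij : i = j
  · subst hij; rfl
  · simp [cyclicSchrodinger, hij, Ne.symm hij, hadj]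

theorem cyclicSchrodinger_apply_nonpos {q q' : ZMod N} (h : q ≠ q') :
    cyclicSchrodinger N V q q' ≤ 0 := by
  simp only [cyclicSchrodinger, of_apply, if_neg (Ne.symm h)]
  split_ifs <;> norm_num

theorem cyclicSchrodinger_mulVec_apply [NeZero N] (hN : 3 ≤ N) (x : ZMod N → ℝ) (q : ZMod N) :
    (cyclicSchrodinger N V *ᵥ x) q = V q * x q - x (q + 1) - x (q - 1) := by
  have : Fact (1 < N) := ⟨by omega⟩
  have h2 : (2 : ZMod N) ≠ 0 := by
    intro h
    have := (ZMod.natCast_eq_zero_iff 2 N).mp (by exact_mod_cast h)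
    exact absurd (Nat.le_of_dvd two_pos this) (by omega)
  have hsucc : q + 1 ≠ q := by simp
  have hpred : q - 1 ≠ q := by simp
  have hsucc_pred : q + 1 ≠ q - 1 := fun h => h2 (by linear_combination h)
  have hrow : ∀ q', cyclicSchrodinger N V q q' * x q' =
      (if q' = q then V q * x q' else 0) + (if q' = q + 1 then -x q' else 0)
        + (if q' = q - 1 then -x q' else 0) := by
    intro q'
    by_cases hA : q' = q <;> by_cases hB : q' = q + 1 <;> by_cases hC : q' = q - 1 <;>
      simp_all [cyclicSchrodinger]
  simp only [mulVec, dotProduct, hrow, Finset.sum_add_distrib, Finset.sum_ite_eq',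
    Finset.mem_univ, if_true]
  ring

end CyclicSchrodinger

/-- Let `H` be the real symmetric `N × N` matrix indexed by `ℤ/Nℤ`
(`N ≥ 3`) with `V` on the diagonal, `−1` on the two cyclic off-diagonals and `0`
elsewhere, and let `e₀` be its smallest eigenvalue.  Then for every strictly positive
vector `φ : ℤ/Nℤ → ℝ`,
`min_q (−(φ(q+1) + φ(q−1))/φ(q) + V(q)) ≤ e₀ ≤ max_q (−(φ(q+1) + φ(q−1))/φ(q) + V(q))`. -/
theorem periodic_discrete_schrodinger_bounds (N : ℕ) [NeZero N] (hN : 3 ≤ N)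
    (V : ZMod N → ℝ) (H : Matrix (ZMod N) (ZMod N) ℝ)
    (hH : ∀ q q' : ZMod N, H q q' =
      if q' = q then V q else if q' = q + 1 ∨ q' = q - 1 then -1 else 0)
    (e₀ : ℝ)
    (heig : ∃ v : ZMod N → ℝ, v ≠ 0 ∧ H.mulVec v = e₀ • v)
    (hmin : ∀ (μ : ℝ) (v : ZMod N → ℝ), v ≠ 0 → H.mulVec v = μ • v → e₀ ≤ μ)
    (φ : ZMod N → ℝ) (hφpos : ∀ q, 0 < φ q) :
    (⨅ q : ZMod N, (-(φ (q + 1) + φ (q - 1)) / φ q + V q)) ≤ e₀ ∧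
    e₀ ≤ (⨆ q : ZMod N, (-(φ (q + 1) + φ (q - 1)) / φ q + V q)) := by
  obtain rfl : H = cyclicSchrodinger N V := Matrix.ext hH
  set f : ZMod N → ℝ := fun q => -(φ (q + 1) + φ (q - 1)) / φ q + V q
  have hf : ∀ q, (cyclicSchrodinger N V *ᵥ φ) q = f q * φ q := fun q => by
    rw [cyclicSchrodinger_mulVec_apply V hN, add_mul, neg_div, neg_mul,
      div_mul_cancel₀ _ (hφpos q).ne']
    ring
  constructor
  · obtain ⟨v, hv, hHv⟩ := heig
    obtain ⟨q, hq⟩ := exists_mulVec_le_mul_of_mulVec_eq_smul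
      (fun _ _ => cyclicSchrodinger_apply_nonpos V) hφpos hv hHv
    rw [hf] at hq
    exact (ciInf_le (Set.finite_range f).bddBelow q).trans (le_of_mul_le_mul_right hq (hφpos q))
  · obtain ⟨μ, v, hv, hHv, q, hq⟩ :=
      (cyclicSchrodinger_isHermitian V).exists_eigenvalue_mul_le_mulVec hφpos
    rw [hf] at hq
    exact (hmin μ v hv hHv).trans <|
      (le_of_mul_le_mul_right hq (hφpos q)).trans (le_ciSup (Set.finite_range f).bddAbove q)
end

section
/- (Bound for the bottom of the Hofstadter butterfly.) Let V₀ > 0 and let M, N be coprime positive integers. Let H be the bounded self-adjoint Harper operator on ℓ²(ℤ; ℂ) given by (Hφ)(q) = −φ(q+1) − φ(q−1) − V₀ cos(2πqM/N)·φ(q). Then for every N-periodic positive test vector, i.e. every ψ : ℤ/Nℤ → ℝ with ψ(q) > 0 for all q, and for all real numbers a, b such that a·ψ(q) ≤ −ψ(q+1) − ψ(q−1) − V₀ cos(2πqM/N)·ψ(q) ≤ b·ψ(q) for every q ∈ ℤ/Nℤ, one has a ≤ inf σ(H) ≤ b, where inf σ(H) is the infimum of the (real) spectrum of H. -/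
/-!
Ground state representation: for a positive sequence `Ψ` and `x ∈ ℓ²(ℤ)`, with `φ = x / Ψ`,
`re ⟪H x, x⟫ = ∑ (HΨ / Ψ)(q) |x q|² + ∑ Ψ(q) Ψ(q+1) |φ(q+1) - φ(q)|²`.
If `a Ψ ≤ HΨ` the first sum is at least `a ‖x‖²` and the second is nonnegative, so `a ≤ H` and
`σ(H) ⊆ [a, ∞)`. If `HΨ ≤ b Ψ`, the truncation `x = Ψ · 1_[0,K)` has `φ` jumping only at the two
ends, so `re ⟪H x, x⟫ ≤ b ‖x‖² + O(1)` while `‖x‖² ≥ K (min Ψ)² → ∞`; since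
`inf σ(H) = inf re ⟪H x, x⟫ / ‖x‖²`, this gives `inf σ(H) ≤ b`. A periodic `ψ` is bounded and
bounded away from `0`, which makes all the series converge.
-/

open Real
open scoped ComplexInnerProductSpace

local notation "ℓ²(ℤ)" => lp (fun _ : ℤ => ℂ) 2

instance lp.instNontrivial {α : Type*} [Nonempty α] {E : α → Type*}
    [∀ i, NormedAddCommGroup (E i)] [∀ i, Nontrivial (E i)] {p : ENNReal} :
    Nontrivial (lp E p) := by
  classical
  obtain ⟨i⟩ := ‹Nonempty α›
  obtain ⟨a, ha⟩ := exists_ne (0 : E i)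
  exact ⟨lp.single p i a, 0, fun h => ha (by simpa using congrArg (fun f : lp E p => f i) h)⟩

section Spectrum
variable {E : Type*} [NormedAddCommGroup E] [InnerProductSpace ℂ E] [CompleteSpace E]

theorem ContinuousLinearMap.algebraMap_le_iff_forall_mul_norm_sq_le {T : E →L[ℂ] E}
    (hT : IsSelfAdjoint T) (r : ℝ) :
    algebraMap ℝ (E →L[ℂ] E) r ≤ T ↔ ∀ x, r * ‖x‖ ^ 2 ≤ RCLike.re ⟪T x, x⟫ := by
  have hr : IsSelfAdjoint (algebraMap ℝ (E →L[ℂ] E) r) := .algebraMap _ (.all r)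
  have hrx : ∀ x : E, algebraMap ℝ (E →L[ℂ] E) r x = (r : ℂ) • x := fun x => rfl
  simp only [le_def, isPositive_def', hT.sub hr, true_and, reApplyInnerSelf_apply, sub_apply,
    inner_sub_left, map_sub, sub_nonneg, hrx, inner_smul_left, Complex.conj_ofReal,
    RCLike.re_to_complex, Complex.re_ofReal_mul]
  simp only [← RCLike.re_to_complex, inner_self_eq_norm_sq]

theorem le_sInf_spectrum_iff [Nontrivial E] {T : E →L[ℂ] E} (hT : IsSelfAdjoint T) (r : ℝ) :
    r ≤ sInf (spectrum ℝ T) ↔ ∀ x, r * ‖x‖ ^ 2 ≤ RCLike.re ⟪T x, x⟫ := by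
  rw [← T.algebraMap_le_iff_forall_mul_norm_sq_le hT, algebraMap_le_iff_le_spectrum (R := ℝ) hT]
  exact ⟨fun h x hx =>
      h.trans (csInf_le (ContinuousFunctionalCalculus.isCompact_spectrum T).bddBelow hx),
    le_csInf (ContinuousFunctionalCalculus.spectrum_nonempty T hT)⟩

end Spectrum

theorem le_of_forall_exists_mul_le_mul_add {s b D : ℝ}
    (h : ∀ R, ∃ y, R ≤ y ∧ s * y ≤ b * y + D) : s ≤ b := by
  by_contra! hbs
  obtain ⟨y, hRy, hy⟩ := h (D / (s - b) + 1)
  have hD : D < (s - b) * y := by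
    rw [← div_lt_iff₀' (sub_pos.2 hbs)]
    linarith
  linarith

theorem lp.hasSum_norm_sq {ι : Type*} {E : ι → Type*} [∀ i, NormedAddCommGroup (E i)]
    (f : lp E 2) : HasSum (fun i => ‖f i‖ ^ 2) (‖f‖ ^ 2) := by
  simpa using lp.hasSum_norm (p := 2) (by norm_num) f

theorem Summable.hasSum_comp_sub_one_sub {G : Type*} [AddCommGroup G] [TopologicalSpace G]
    [IsTopologicalAddGroup G] {k : ℤ → G} (hk : Summable k) :
    HasSum (fun q => k (q - 1) - k q) 0 := by
  simpa using ((Equiv.subRight (1 : ℤ)).hasSum_iff.mpr hk.hasSum).sub hk.hasSum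

def schrodinger (V Ψ : ℤ → ℝ) (q : ℤ) : ℝ := -Ψ (q + 1) - Ψ (q - 1) - V q * Ψ q

def IsSchrodingerOperator (V : ℤ → ℝ) (H : ℓ²(ℤ) →L[ℂ] ℓ²(ℤ)) : Prop :=
  ∀ f q, H f q = -f (q + 1) - f (q - 1) - ((V q : ℝ) : ℂ) * f q

-- The last bracket has the form `k (q - 1) - k q`, so it telescopes when summed over `q`.
theorem re_inner_neg_sub_sub_mul_eq {p₀ p p₁ : ℝ} (h : p ≠ 0) (h₁ : p₁ ≠ 0)
    (v : ℝ) (u₀ u u₁ : ℂ) :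
    RCLike.re ⟪-u₁ - u₀ - (v : ℂ) * u, u⟫ =
      (-p₁ - p₀ - v * p) / p * ‖u‖ ^ 2 + p * p₁ * ‖u₁ / p₁ - u / p‖ ^ 2
        + ((p₀ / p * ‖u‖ ^ 2 - RCLike.re ⟪u, u₀⟫) - (p / p₁ * ‖u₁‖ ^ 2 - RCLike.re ⟪u₁, u⟫)) := by
  simp only [RCLike.inner_apply, RCLike.re_to_complex, Complex.sq_norm, Complex.normSq_apply,
    Complex.mul_re, Complex.conj_re, Complex.conj_im, Complex.sub_re, Complex.sub_im,
    Complex.neg_re, Complex.neg_im, Complex.mul_im, Complex.ofReal_re, Complex.ofReal_im,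
    Complex.div_ofReal_re, Complex.div_ofReal_im]
  field_simp
  ring

theorem lp.summable_re_inner_shift {𝕜 E : Type*} [RCLike 𝕜] [NormedAddCommGroup E]
    [InnerProductSpace 𝕜 E] (x : lp (fun _ : ℤ => E) 2) :
    Summable fun q => RCLike.re (inner 𝕜 (x (q + 1)) (x q)) := by
  have hn := (lp.hasSum_norm_sq x).summable
  refine Summable.of_norm_bounded
    ((((Equiv.addRight (1 : ℤ)).summable_iff.mpr hn).add hn).div_const 2) fun q => ?_
  calc ‖RCLike.re (inner 𝕜 (x (q + 1)) (x q))‖ ≤ ‖x (q + 1)‖ * ‖x q‖ := by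
        rw [Real.norm_eq_abs]; exact (RCLike.abs_re_le_norm _).trans (norm_inner_le_norm _ _)
    _ ≤ (‖x (q + 1)‖ ^ 2 + ‖x q‖ ^ 2) / 2 := by nlinarith [two_mul_le_add_sq ‖x (q + 1)‖ ‖x q‖]

noncomputable def truncation (Ψ : ℤ → ℝ) (K : ℕ) : ℓ²(ℤ) :=
  ⟨(Set.Ico (0 : ℤ) K).indicator fun q => (Ψ q : ℂ),
    (memℓp_zero ((Set.finite_Ico 0 (K : ℤ)).subset fun _ => Set.mem_of_indicator_ne_zero)
      ).of_exponent_ge bot_le⟩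

theorem truncation_apply (Ψ : ℤ → ℝ) (K : ℕ) (q : ℤ) :
    truncation Ψ K q = (Set.Ico (0 : ℤ) K).indicator (fun q => (Ψ q : ℂ)) q := rfl

theorem truncation_apply_div {Ψ : ℤ → ℝ} (hΨ : ∀ q, Ψ q ≠ 0) (K : ℕ) (q : ℤ) :
    truncation Ψ K q / Ψ q = (Set.Ico (0 : ℤ) K).indicator 1 q := by
  simp only [truncation_apply, Set.indicator_apply, Pi.one_apply]
  split_ifs
  · exact div_self (Complex.ofReal_ne_zero.2 (hΨ q))
  · exact zero_div _

theorem norm_sq_sub_indicator_Ico_le (K : ℕ) (q : ℤ) :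
    ‖(Set.Ico (0 : ℤ) K).indicator (1 : ℤ → ℂ) (q + 1) - (Set.Ico (0 : ℤ) K).indicator 1 q‖ ^ 2
      ≤ (if q = -1 then 1 else 0) + (if q = K - 1 then 1 else 0) := by
  simp only [Set.indicator_apply, Set.mem_Ico, Pi.one_apply]
  split_ifs <;> norm_num <;> omega

theorem mul_sq_le_norm_sq_truncation {Ψ : ℤ → ℝ} {m : ℝ} (hm : 0 ≤ m) (hΨ : ∀ q, m ≤ Ψ q)
    (K : ℕ) : K * m ^ 2 ≤ ‖truncation Ψ K‖ ^ 2 := by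
  have hsum := sum_le_hasSum (Finset.Ico (0 : ℤ) K) (fun _ _ => sq_nonneg _)
    (lp.hasSum_norm_sq (truncation Ψ K))
  refine le_trans ?_ hsum
  have hcard : ((Finset.Ico (0 : ℤ) K).card : ℝ) = K := by simp
  rw [← hcard, ← nsmul_eq_mul]
  refine Finset.card_nsmul_le_sum _ _ _ fun q hq => ?_
  rw [truncation_apply, Set.indicator_of_mem (by simpa using hq), Complex.norm_real,
    Real.norm_eq_abs, sq_abs]
  exact pow_le_pow_left₀ hm (hΨ q) 2

theorem le_div_mul_of_forall_mem_Icc {ι : Type*} {f : ι → ℝ} {m C : ℝ} (hm : 0 < m)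
    (hf : ∀ i, f i ∈ Set.Icc m C) (i j : ι) : f i ≤ C / m * f j := calc
  f i ≤ C / m * m := by rw [div_mul_cancel₀ _ hm.ne']; exact (hf i).2
  _ ≤ C / m * f j := by
    gcongr
    · exact div_nonneg (hm.le.trans ((hf i).1.trans (hf i).2)) hm.le
    · exact (hf j).1

section GroundState

variable {V : ℤ → ℝ} {H : ℓ²(ℤ) →L[ℂ] ℓ²(ℤ)} {Ψ : ℤ → ℝ}

theorem IsSchrodingerOperator.hasSum_re_inner (hH : IsSchrodingerOperator V H)
    (hΨ : ∀ q, 0 < Ψ q) {C : ℝ} (hC : ∀ q, Ψ q ≤ C * Ψ (q + 1)) (x : ℓ²(ℤ)) :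
    HasSum (fun q => schrodinger V Ψ q / Ψ q * ‖x q‖ ^ 2
        + Ψ q * Ψ (q + 1) * ‖x (q + 1) / Ψ (q + 1) - x q / Ψ q‖ ^ 2) (RCLike.re ⟪H x, x⟫) := by
  set k : ℤ → ℝ := fun q => Ψ q / Ψ (q + 1) * ‖x (q + 1)‖ ^ 2 - RCLike.re ⟪x (q + 1), x q⟫
  have hk : Summable k := by
    refine Summable.sub ?_ (lp.summable_re_inner_shift x)
    refine Summable.of_nonneg_of_le (fun q => by have := hΨ q; have := hΨ (q + 1); positivity)
      (fun q => mul_le_mul_of_nonneg_right ((div_le_iff₀ (hΨ _)).2 (hC q)) (sq_nonneg _))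
      (((Equiv.addRight (1 : ℤ)).summable_iff.mpr (lp.hasSum_norm_sq x).summable).mul_left C)
  have hre : HasSum (fun q => RCLike.re ⟪H x q, x q⟫) (RCLike.re ⟪H x, x⟫) :=
    RCLike.hasSum_re _ (lp.hasSum_inner (H x) x)
  have := hre.sub hk.hasSum_comp_sub_one_sub
  rw [sub_zero] at this
  refine this.congr_fun fun q => ?_
  rw [hH x q, re_inner_neg_sub_sub_mul_eq (p₀ := Ψ (q - 1)) (hΨ q).ne' (hΨ (q + 1)).ne']
  simp only [schrodinger, k, sub_add_cancel]
  ring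

theorem IsSchrodingerOperator.mul_norm_sq_le_re_inner (hH : IsSchrodingerOperator V H)
    (hΨ : ∀ q, 0 < Ψ q) {C : ℝ} (hC : ∀ q, Ψ q ≤ C * Ψ (q + 1)) {a : ℝ}
    (ha : ∀ q, a * Ψ q ≤ schrodinger V Ψ q) (x : ℓ²(ℤ)) :
    a * ‖x‖ ^ 2 ≤ RCLike.re ⟪H x, x⟫ := by
  refine hasSum_le (fun q => ?_) ((lp.hasSum_norm_sq x).mul_left a) (hH.hasSum_re_inner hΨ hC x)
  have hq₁ := hΨ (q + 1)
  have hq := hΨ q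
  exact le_add_of_le_of_nonneg
    (mul_le_mul_of_nonneg_right ((le_div_iff₀ hq).2 (ha q)) (sq_nonneg _)) (by positivity)

theorem IsSchrodingerOperator.re_inner_truncation_le (hH : IsSchrodingerOperator V H)
    {m C : ℝ} (hm : 0 < m) (hΨ : ∀ q, Ψ q ∈ Set.Icc m C) {b : ℝ}
    (hb : ∀ q, schrodinger V Ψ q ≤ b * Ψ q) (K : ℕ) :
    RCLike.re ⟪H (truncation Ψ K), truncation Ψ K⟫ ≤ b * ‖truncation Ψ K‖ ^ 2 + 2 * C ^ 2 := by
  have hpos q : 0 < Ψ q := hm.trans_le (hΨ q).1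
  have hjump := ((hasSum_ite_eq (-1 : ℤ) (1 : ℝ)).add
    (hasSum_ite_eq ((K : ℤ) - 1) (1 : ℝ))).mul_left (C ^ 2)
  refine (hasSum_le (fun q => ?_)
    (hH.hasSum_re_inner hpos (fun q => le_div_mul_of_forall_mem_Icc hm hΨ q (q + 1)) _)
    (((lp.hasSum_norm_sq _).mul_left b).add hjump)).trans_eq (by ring)
  rw [truncation_apply_div (fun q => (hpos q).ne'), truncation_apply_div (fun q => (hpos q).ne')]
  refine add_le_add
    (mul_le_mul_of_nonneg_right ((div_le_iff₀ (hpos q)).2 (hb q)) (sq_nonneg _)) ?_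
  have hΨΨ : Ψ q * Ψ (q + 1) ≤ C ^ 2 :=
    sq C ▸ mul_le_mul (hΨ q).2 (hΨ _).2 (hpos _).le ((hpos q).le.trans (hΨ q).2)
  exact mul_le_mul hΨΨ (norm_sq_sub_indicator_Ico_le K q) (sq_nonneg _) (sq_nonneg C)

theorem IsSchrodingerOperator.le_sInf_spectrum (hH : IsSchrodingerOperator V H)
    (hsa : IsSelfAdjoint H) (hΨ : ∀ q, 0 < Ψ q) {C : ℝ} (hC : ∀ q, Ψ q ≤ C * Ψ (q + 1)) {a : ℝ}
    (ha : ∀ q, a * Ψ q ≤ schrodinger V Ψ q) : a ≤ sInf (spectrum ℝ H) :=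
  (le_sInf_spectrum_iff hsa a).2 (hH.mul_norm_sq_le_re_inner hΨ hC ha)

theorem IsSchrodingerOperator.sInf_spectrum_le (hH : IsSchrodingerOperator V H)
    (hsa : IsSelfAdjoint H) {m C : ℝ} (hm : 0 < m) (hΨ : ∀ q, Ψ q ∈ Set.Icc m C) {b : ℝ}
    (hb : ∀ q, schrodinger V Ψ q ≤ b * Ψ q) : sInf (spectrum ℝ H) ≤ b := by
  have hvar := (le_sInf_spectrum_iff hsa _).1 le_rfl
  refine le_of_forall_exists_mul_le_mul_add (D := 2 * C ^ 2) fun R => ?_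
  obtain ⟨K, hK⟩ := exists_nat_ge (R / m ^ 2)
  refine ⟨_, ?_, (hvar (truncation Ψ K)).trans (hH.re_inner_truncation_le hm hΨ hb K)⟩
  calc R ≤ K * m ^ 2 := (div_le_iff₀ (by positivity)).1 hK
    _ ≤ _ := mul_sq_le_norm_sq_truncation hm.le (fun q => (hΨ q).1) K

end GroundState

theorem cos_two_pi_mul_val_intCast_div (M N : ℕ) [NeZero N] (q : ℤ) :
    cos (2 * π * ((q : ZMod N).val : ℝ) * M / N) = cos (2 * π * q * M / N) := by
  have hq : (q : ℝ) = ((q : ZMod N).val : ℝ) + (q / N : ℤ) * N := by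
    have h : ((q : ZMod N).val : ℤ) + N * (q / N) = q := by
      rw [ZMod.val_intCast]; exact Int.emod_add_mul_ediv q N
    have := congrArg (Int.cast : ℤ → ℝ) h
    push_cast at this
    linarith
  have hN : (N : ℝ) ≠ 0 := Nat.cast_ne_zero.2 (NeZero.ne N)
  rw [hq, show 2 * π * (((q : ZMod N).val : ℝ) + (q / N : ℤ) * N) * M / N
      = 2 * π * ((q : ZMod N).val : ℝ) * M / N + ((q / N * M : ℤ) : ℝ) * (2 * π) by
    push_cast; field_simp]
  exact (cos_add_int_mul_two_pi _ _).symm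

theorem harper_bottom_bounds_general (V₀ : ℝ)
    (M N : ℕ) [NeZero N]
    (H : lp (fun _ : ℤ => ℂ) 2 →L[ℂ] lp (fun _ : ℤ => ℂ) 2)
    (hH : ∀ (f : lp (fun _ : ℤ => ℂ) 2) (q : ℤ),
      (H f) q = -f (q + 1) - f (q - 1)
        - ((V₀ * Real.cos (2 * π * (q : ℝ) * (M : ℝ) / (N : ℝ)) : ℝ) : ℂ) * f q)
    (hsa : IsSelfAdjoint H)
    (ψ : ZMod N → ℝ) (hψpos : ∀ q, 0 < ψ q)
    (a b : ℝ)
    (hab : ∀ q : ZMod N,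
      a * ψ q ≤ -ψ (q + 1) - ψ (q - 1)
          - V₀ * Real.cos (2 * π * (q.val : ℝ) * (M : ℝ) / (N : ℝ)) * ψ q ∧
      -ψ (q + 1) - ψ (q - 1)
          - V₀ * Real.cos (2 * π * (q.val : ℝ) * (M : ℝ) / (N : ℝ)) * ψ q ≤ b * ψ q) :
    a ≤ sInf {r : ℝ | (r : ℂ) ∈ spectrum ℂ H} ∧
    sInf {r : ℝ | (r : ℂ) ∈ spectrum ℂ H} ≤ b := by
  have hHarper : IsSchrodingerOperator (fun q => V₀ * cos (2 * π * q * M / N)) H := hH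
  set Ψ : ℤ → ℝ := fun q => ψ q
  have hΨ q : schrodinger (fun q => V₀ * cos (2 * π * q * M / N)) Ψ q =
      -ψ (q + 1) - ψ (q - 1) - V₀ * cos (2 * π * ((q : ZMod N).val : ℝ) * M / N) * ψ q := by
    simp only [schrodinger, Ψ, Int.cast_add, Int.cast_sub, Int.cast_one,
      cos_two_pi_mul_val_intCast_div]
  obtain ⟨qmin, hmin⟩ := Finite.exists_min ψ
  obtain ⟨qmax, hmax⟩ := Finite.exists_max ψ
  have hbounds q : Ψ q ∈ Set.Icc (ψ qmin) (ψ qmax) := ⟨hmin _, hmax _⟩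
  have hspec : {r : ℝ | (r : ℂ) ∈ spectrum ℂ H} = spectrum ℝ H :=
    Set.ext fun r => by
      rw [Set.mem_ofPred_eq, ← Complex.coe_algebraMap, spectrum.algebraMap_mem_iff]
  rw [hspec]
  exact ⟨hHarper.le_sInf_spectrum hsa (fun q => hψpos _)
      (fun q => le_div_mul_of_forall_mem_Icc (hψpos qmin) hbounds q (q + 1))
      fun q => hΨ q ▸ (hab q).1,
    hHarper.sInf_spectrum_le hsa (hψpos qmin) hbounds fun q => hΨ q ▸ (hab q).2⟩

/-- **bound for the bottom of the Hofstadter butterfly.** Let `H` be the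
Harper operator `(Hφ)(q) = −φ(q+1) − φ(q−1) − V₀ cos(2πqM/N) φ(q)` on `ℓ²(ℤ; ℂ)` with
`V₀ > 0` and `M, N` coprime positive integers.  For every `N`-periodic strictly
positive test vector `ψ : ℤ/Nℤ → ℝ` and all `a b : ℝ` with
`a·ψ(q) ≤ −ψ(q+1) − ψ(q−1) − V₀ cos(2πqM/N) ψ(q) ≤ b·ψ(q)` for all `q`, one has
`a ≤ inf σ(H) ≤ b`. -/
theorem harper_bottom_bounds (V₀ : ℝ) (hV₀ : 0 < V₀)
    (M N : ℕ) [NeZero N] (hM : 0 < M) (hN : 0 < N) (hMN : Nat.Coprime M N)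
    (H : lp (fun _ : ℤ => ℂ) 2 →L[ℂ] lp (fun _ : ℤ => ℂ) 2)
    (hH : ∀ (f : lp (fun _ : ℤ => ℂ) 2) (q : ℤ),
      (H f) q = -f (q + 1) - f (q - 1)
        - ((V₀ * Real.cos (2 * π * (q : ℝ) * (M : ℝ) / (N : ℝ)) : ℝ) : ℂ) * f q)
    (hsa : IsSelfAdjoint H)
    (ψ : ZMod N → ℝ) (hψpos : ∀ q, 0 < ψ q)
    (a b : ℝ)
    (hab : ∀ q : ZMod N,
      a * ψ q ≤ -ψ (q + 1) - ψ (q - 1)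
          - V₀ * Real.cos (2 * π * (q.val : ℝ) * (M : ℝ) / (N : ℝ)) * ψ q ∧
      -ψ (q + 1) - ψ (q - 1)
          - V₀ * Real.cos (2 * π * (q.val : ℝ) * (M : ℝ) / (N : ℝ)) * ψ q ≤ b * ψ q) :
    a ≤ sInf {r : ℝ | (r : ℂ) ∈ spectrum ℂ H} ∧
    sInf {r : ℝ | (r : ℂ) ∈ spectrum ℂ H} ≤ b :=
  harper_bottom_bounds_general V₀ M N H hH hsa ψ hψpos a b hab
end
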